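/- arXiv:2509.17591 — 5 statements merged into one kernel-verified Lean document; each statement's English description precedes it below -/
import Mathlib

section
/- Let U be a doubly periodic array of period r₁×r₂ with values in L, and fix a monomial order ≤_T on ℕ×ℕ. Then the set Λ(U) = {f ∈ L[X₁,X₂] : f generates U} (together with the zero polynomial) is an ideal of the polynomial ring L[X₁,X₂]. -/
/-- A monomial order on ℕ × ℕ: a linear order compatible with addition
for which (0,0) is the least element. -/
structure MonOrd where
  le : ℕ × ℕ → ℕ × ℕ → Prop
  refl : ∀ a, le a a
  trans : ∀ a b c, le a b → le b c → le a c
  antisymm : ∀ a b, le a b → le b a → a = b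
  total : ∀ a b, le a b ∨ le b a
  add_right : ∀ a b c, le a b → le (a + c) (b + c)
  zero_le : ∀ a, le (0, 0) a

/-- Strict version of a monomial order. -/
def MonOrd.lt (T : MonOrd) (a b : ℕ × ℕ) : Prop := T.le a b ∧ a ≠ b

/-- `s` is the leading power product exponent of `f` w.r.t. `T`. -/
def IsLP {L : Type} [Field L] (T : MonOrd) (f : (ℕ × ℕ) →₀ L) (s : ℕ × ℕ) : Prop :=
  s ∈ f.support ∧ ∀ m ∈ f.support, T.le m s

/-- `f[U]_n`, computed with respect to a given leading exponent `s` of `f`. -/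
noncomputable def fApp {L : Type} [Field L] (U : ℕ × ℕ → L) (f : (ℕ × ℕ) →₀ L)
    (s n : ℕ × ℕ) : L :=
  if s.1 ≤ n.1 ∧ s.2 ≤ n.2 then
    ∑ m ∈ f.support, f m * U (m.1 + n.1 - s.1, m.2 + n.2 - s.2)
  else 0

/-- `f` generates the doubly periodic array `U`. -/
def GeneratesU {L : Type} [Field L] (T : MonOrd) (U : ℕ × ℕ → L) (f : (ℕ × ℕ) →₀ L) : Prop :=
  ∃ s, IsLP T f s ∧ ∀ n, fApp U f s n = 0

/-- `f` generates the finite subarray `u^l` of `U`. -/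
def GeneratesUpTo {L : Type} [Field L] (T : MonOrd) (U : ℕ × ℕ → L) (l : ℕ × ℕ)
    (f : (ℕ × ℕ) →₀ L) : Prop :=
  ∃ s, IsLP T f s ∧ ∀ k, s.1 ≤ k.1 → s.2 ≤ k.2 → T.lt k l → fApp U f s k = 0

/-- `U` is a doubly periodic array of period r₁ × r₂. -/
def DoublyPeriodic {L : Type} (r₁ r₂ : ℕ) (U : ℕ × ℕ → L) : Prop :=
  ∀ n m : ℕ × ℕ, n.1 % r₁ = m.1 % r₁ → n.2 % r₂ = m.2 % r₂ → U n = U m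

/-- Evaluation of a bivariate polynomial at a point `(x, y)`. -/
noncomputable def polyEval {L : Type} [Field L] (f : (ℕ × ℕ) →₀ L) (x y : L) : L :=
  ∑ m ∈ f.support, f m * x ^ m.1 * y ^ m.2

/-- The syndrome table afforded by `τ` and `e`:  `u_n = e(α^(τ+n))`. -/
noncomputable def synTable {F L : Type} [Field F] [Field L] [Algebra F L] {r₁ r₂ : ℕ}
    (α₁ α₂ : L) (τ : Fin r₁ × Fin r₂) (e : Fin r₁ × Fin r₂ → F) : ℕ × ℕ → L :=
  fun n => ∑ p : Fin r₁ × Fin r₂,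
    algebraMap F L (e p) * (α₁ ^ ((τ.1 : ℕ) + n.1)) ^ (p.1 : ℕ)
      * (α₂ ^ ((τ.2 : ℕ) + n.2)) ^ (p.2 : ℕ)

/-- The weight ω(e): number of nonzero coefficients. -/
noncomputable def wt {F : Type} [Field F] {r₁ r₂ : ℕ} (e : Fin r₁ × Fin r₂ → F) : ℕ :=
  {p | e p ≠ 0}.ncard

/-- The hyperbolic set B(δ) of amplitude δ inside {0,…,r₁−1} × {0,…,r₂−1}. -/
def hypB (r₁ r₂ δ : ℕ) : Set (ℕ × ℕ) :=
  {l | l.1 < r₁ ∧ l.2 < r₂ ∧ (l.1 + 1) * (l.2 + 1) ≤ δ ∧ l ≠ (δ - 1, 0) ∧ l ≠ (0, δ - 1)}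

/-- The border set 𝔉 = {l ∈ B(2t+1) : 2t ≤ (l₁+1)(l₂+1)}. -/
def frontF (r₁ r₂ t : ℕ) : Set (ℕ × ℕ) :=
  {l ∈ hypB r₁ r₂ (2 * t + 1) | 2 * t ≤ (l.1 + 1) * (l.2 + 1)}

/-- The lexicographic order with X₁ > X₂. -/
def lexMonOrd : MonOrd where
  le a b := a.1 < b.1 ∨ (a.1 = b.1 ∧ a.2 ≤ b.2)
  refl a := by omega
  trans a b c h1 h2 := by omega
  antisymm a b h1 h2 := by
    obtain ⟨a1, a2⟩ := a; obtain ⟨b1, b2⟩ := b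
    simp_all only [Prod.mk.injEq]; omega
  total a b := by omega
  add_right a b c h := by
    obtain ⟨a1, a2⟩ := a; obtain ⟨b1, b2⟩ := b; obtain ⟨c1, c2⟩ := c
    simp_all only [Prod.mk_add_mk]; omega
  zero_le a := by
    obtain ⟨a1, a2⟩ := a; simp only []; omega

/-- The (reverse) graded order with X₂ > X₁. -/
def grMonOrd : MonOrd where
  le a b := a.1 + a.2 < b.1 + b.2 ∨ (a.1 + a.2 = b.1 + b.2 ∧ a.2 ≤ b.2)
  refl a := by omega
  trans a b c h1 h2 := by omega
  antisymm a b h1 h2 := by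
    obtain ⟨a1, a2⟩ := a; obtain ⟨b1, b2⟩ := b
    simp_all only [Prod.mk.injEq]; omega
  total a b := by omega
  add_right a b c h := by
    obtain ⟨a1, a2⟩ := a; obtain ⟨b1, b2⟩ := b; obtain ⟨c1, c2⟩ := c
    simp_all only [Prod.mk_add_mk]; omega
  zero_le a := by
    obtain ⟨a1, a2⟩ := a; simp only []; omega

/-- The ideal (X₁^{r₁} − 1, X₂^{r₂} − 1) of L[X₁,X₂]. -/
noncomputable def periodIdeal (L : Type) [Field L] (r₁ r₂ : ℕ) :
    Ideal (AddMonoidAlgebra L (ℕ × ℕ)) :=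
  Ideal.span {AddMonoidAlgebra.single (r₁, 0) 1 - 1, AddMonoidAlgebra.single (0, r₂) 1 - 1}


/-!
Whether `f` generates `U` does not depend on its leading exponent `s`: `f[U]_n` vanishes trivially
unless `s ⪯ n`, and `f[U]_{s+k} = Σ_m f_m u_{m+k}`. Hence `Λ(U) ∪ {0}` consists of the `f` with
`⟨X^k f, U⟩ = 0` for every monomial `X^k`, where `⟨g, U⟩ = Σ_m g_m u_m`. As the monomials span
`L[X₁,X₂]`, this is `{f | ∀ g, ⟨g f, U⟩ = 0}`, the largest ideal contained in the kernel of `⟨·, U⟩`.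
-/

open AddMonoidAlgebra

def kerMulIdeal {A M : Type*} [Semiring A] [AddCommMonoid M] (ψ : A →+ M) : Ideal A where
  carrier := {f | ∀ g, ψ (g * f) = 0}
  add_mem' {f₁ f₂} h₁ h₂ g := by simp only [mul_add, map_add, h₁ g, h₂ g, add_zero]
  zero_mem' g := by simp
  smul_mem' c f hf g := by simpa only [smul_eq_mul, ← mul_assoc] using hf (g * c)

theorem mem_kerMulIdeal_iff_forall_single_mul {R M N : Type*} [CommSemiring R] [AddMonoid M]
    [AddCommMonoid N] [Module R N] (ψ : R[M] →ₗ[R] N) (f : R[M]) :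
    f ∈ kerMulIdeal ψ.toAddMonoidHom ↔ ∀ k, ψ (single k 1 * f) = 0 := by
  refine ⟨fun hf k => hf _, fun hf g => ?_⟩
  induction g using AddMonoidAlgebra.induction_linear with
  | zero => simp
  | add g₁ g₂ h₁ h₂ => simp_all [add_mul]
  | single m r =>
    have hsingle : single m r * f = r • (single m 1 * f) := by
      rw [← smul_mul_assoc, smul_single, smul_eq_mul, mul_one]
    simp only [LinearMap.toAddMonoidHom_coe, hsingle, map_smul, hf, smul_zero]

noncomputable def arrayPairing {R M : Type*} [CommSemiring R] (U : M → R) : R[M] →ₗ[R] R :=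
  Finsupp.linearCombination R U ∘ₗ (coeffLinearEquiv R).toLinearMap

theorem arrayPairing_single_one_mul {R M : Type*} [CommSemiring R] [AddMonoid M] (U : M → R)
    (k : M) (f : R[M]) :
    arrayPairing U (single k 1 * f) = Finsupp.linearCombination R (fun m => U (k + m)) f.coeff := by
  induction f using AddMonoidAlgebra.induction_linear with
  | zero => simp
  | add f₁ f₂ h₁ h₂ => simp_all [mul_add]
  | single m r => simp [arrayPairing, single_mul_single]

theorem MonOrd.exists_forall_le_of_nonempty (T : MonOrd) {s : Finset (ℕ × ℕ)}
    (hs : s.Nonempty) : ∃ a ∈ s, ∀ b ∈ s, T.le b a := by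
  induction hs using Finset.Nonempty.cons_induction with
  | singleton x => exact ⟨x, by simp, by simp [T.refl]⟩
  | cons x t _ _ ih =>
    obtain ⟨a, ha, hmax⟩ := ih
    rcases T.total x a with hxa | hax
    · exact ⟨a, by simp [ha], by simpa [hxa] using hmax⟩
    · exact ⟨x, by simp, by simpa [T.refl] using fun b hb => T.trans _ _ _ (hmax b hb) hax⟩

section Generates

variable {L : Type} [Field L] (T : MonOrd) (U : ℕ × ℕ → L)

theorem exists_isLP {f : (ℕ × ℕ) →₀ L} (hf : f ≠ 0) : ∃ s, IsLP T f s :=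
  T.exists_forall_le_of_nonempty (Finsupp.support_nonempty_iff.mpr hf)

theorem fApp_add_left (f : (ℕ × ℕ) →₀ L) (s k : ℕ × ℕ) :
    fApp U f s (s + k) = Finsupp.linearCombination L (fun m => U (k + m)) f := by
  rw [fApp, if_pos ⟨Nat.le_add_right _ _, Nat.le_add_right _ _⟩, Finsupp.linearCombination_apply,
    Finsupp.sum]
  refine Finset.sum_congr rfl fun m _ => ?_
  rw [smul_eq_mul]
  congr 2
  ext <;> simp only [Prod.fst_add, Prod.snd_add] <;> omega

theorem forall_fApp_eq_zero_iff (f : (ℕ × ℕ) →₀ L) (s : ℕ × ℕ) :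
    (∀ n, fApp U f s n = 0) ↔ ∀ k, Finsupp.linearCombination L (fun m => U (k + m)) f = 0 := by
  refine ⟨fun h k => fApp_add_left U f s k ▸ h (s + k), fun h n => ?_⟩
  by_cases hsn : s.1 ≤ n.1 ∧ s.2 ≤ n.2
  · rw [← add_tsub_cancel_of_le (show s ≤ n from hsn), fApp_add_left, h]
  · rw [fApp, if_neg hsn]

theorem generatesU_iff {f : (ℕ × ℕ) →₀ L} (hf : f ≠ 0) :
    GeneratesU T U f ↔ ∀ k, Finsupp.linearCombination L (fun m => U (k + m)) f = 0 := by
  refine ⟨fun ⟨s, _, hs⟩ => (forall_fApp_eq_zero_iff U f s).mp hs, fun h => ?_⟩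
  obtain ⟨s, hs⟩ := exists_isLP T hf
  exact ⟨s, hs, (forall_fApp_eq_zero_iff U f s).mpr h⟩

end Generates

theorem lambda_is_ideal_general
    (L : Type) [Field L]
    (T : MonOrd) (U : ℕ × ℕ → L) :
    ∃ I : Ideal (AddMonoidAlgebra L (ℕ × ℕ)),
      ∀ f : AddMonoidAlgebra L (ℕ × ℕ), f ∈ I ↔ (GeneratesU T U f.coeff ∨ f = 0) := by
  refine ⟨kerMulIdeal (arrayPairing U).toAddMonoidHom, fun f => ?_⟩
  simp only [mem_kerMulIdeal_iff_forall_single_mul, arrayPairing_single_one_mul]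
  by_cases hf : f = 0
  · simp [hf]
  · rw [generatesU_iff T U (coeff_eq_zero.not.mpr hf)]
    simp [hf]

/-- For a doubly periodic array `U` and a monomial order `T`,
the set Λ(U) of generating polynomials, together with 0, is an ideal of L[X₁,X₂]. -/
theorem lambda_is_ideal
    (q : ℕ) (hq : IsPrimePow q)
    (F : Type) [Field F] [Fintype F] (hF : Fintype.card F = q)
    (L : Type) [Field L] [Algebra F L]
    (r₁ r₂ : ℕ) (hr₁ : 0 < r₁) (hr₂ : 0 < r₂) (hco : Nat.Coprime q (r₁ * r₂))
    (α₁ α₂ : L) (hα₁ : IsPrimitiveRoot α₁ r₁) (hα₂ : IsPrimitiveRoot α₂ r₂)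
    (T : MonOrd) (U : ℕ × ℕ → L) (hU : DoublyPeriodic r₁ r₂ U) :
    ∃ I : Ideal (AddMonoidAlgebra L (ℕ × ℕ)),
      ∀ f : AddMonoidAlgebra L (ℕ × ℕ), f ∈ I ↔ (GeneratesU T U f.coeff ∨ f = 0) :=
  lambda_is_ideal_general L T U
end

section
/- Let e ∈ 𝔽(r₁,r₂), let τ ∈ 𝓘, and let U be the syndrome table afforded by τ and e. Fix a monomial order ≤_T on ℕ×ℕ. Then the footprint of Λ(U), namely the set Δ(U) = {n ∈ ℕ×ℕ : there is no nonzero f ∈ Λ(U) with LP(f) ⪯ n}, is finite and has cardinality at most ω(e). -/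
/-- Every nonempty finset has a `T`-maximal element. -/
lemma MonOrd.exists_max (T : MonOrd) (t : Finset (ℕ × ℕ)) (h : t.Nonempty) :
    ∃ s ∈ t, ∀ m ∈ t, T.le m s := by
  classical
  induction t using Finset.induction_on with
  | empty => exact absurd h (by simp)
  | @insert a t ha ih =>
    rcases t.eq_empty_or_nonempty with rfl | ht
    · exact ⟨a, by simp, by simp [T.refl]⟩
    · obtain ⟨s, hs, hmax⟩ := ih ht
      rcases T.total a s with h1 | h1
      · refine ⟨s, Finset.mem_insert_of_mem hs, ?_⟩
        intro m hm
        rcases Finset.mem_insert.1 hm with rfl | hm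
        · exact h1
        · exact hmax m hm
      · refine ⟨a, Finset.mem_insert_self a _, ?_⟩
        intro m hm
        rcases Finset.mem_insert.1 hm with rfl | hm
        · exact T.refl _
        · exact T.trans _ _ _ (hmax m hm) h1

/-- If `f` vanishes at all points `(α₁^{p₁}, α₂^{p₂})` with `e p ≠ 0`, then `f`
generates the syndrome table afforded by `τ` and `e`. -/
lemma generates_of_vanish {F L : Type} [Field F] [Field L] [Algebra F L] {r₁ r₂ : ℕ}
    (α₁ α₂ : L) (τ : Fin r₁ × Fin r₂) (e : Fin r₁ × Fin r₂ → F)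
    (T : MonOrd) (f : (ℕ × ℕ) →₀ L) (hf : f ≠ 0)
    (hv : ∀ p : Fin r₁ × Fin r₂, e p ≠ 0 →
      polyEval f (α₁ ^ (p.1 : ℕ)) (α₂ ^ (p.2 : ℕ)) = 0) :
    GeneratesU T (synTable α₁ α₂ τ e) f := by
  classical
  obtain ⟨s, hs, hmax⟩ := T.exists_max f.support (Finsupp.support_nonempty_iff.2 hf)
  refine ⟨s, ⟨hs, hmax⟩, ?_⟩
  intro n
  unfold fApp synTable
  split
  case isFalse => rfl
  case isTrue h =>
    simp only [Finset.mul_sum]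
    rw [Finset.sum_comm]
    apply Finset.sum_eq_zero
    intro p _
    by_cases hep : e p = 0
    · simp [hep]
    · have hpe := hv p hep
      unfold polyEval at hpe
      calc ∑ m ∈ f.support, f m *
              (algebraMap F L (e p) * (α₁ ^ ((τ.1 : ℕ) + (m.1 + n.1 - s.1))) ^ (p.1 : ℕ)
                * (α₂ ^ ((τ.2 : ℕ) + (m.2 + n.2 - s.2))) ^ (p.2 : ℕ))
          = (∑ m ∈ f.support, f m * (α₁ ^ (p.1 : ℕ)) ^ m.1 * (α₂ ^ (p.2 : ℕ)) ^ m.2) *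
              (algebraMap F L (e p) * (α₁ ^ ((τ.1 : ℕ) + n.1 - s.1)) ^ (p.1 : ℕ)
                * (α₂ ^ ((τ.2 : ℕ) + n.2 - s.2)) ^ (p.2 : ℕ)) := by
            rw [Finset.sum_mul]
            apply Finset.sum_congr rfl
            intro m _
            have e1 : (τ.1 : ℕ) + (m.1 + n.1 - s.1) = ((τ.1 : ℕ) + n.1 - s.1) + m.1 := by
              omega
            have e2 : (τ.2 : ℕ) + (m.2 + n.2 - s.2) = ((τ.2 : ℕ) + n.2 - s.2) + m.2 := by
              omega
            rw [e1, e2, pow_add, pow_add, mul_pow, mul_pow,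
              pow_right_comm α₁ m.1 (p.1 : ℕ), pow_right_comm α₂ m.2 (p.2 : ℕ)]
            ring
        _ = 0 := by rw [hpe, zero_mul]

/-- the footprint of Λ(U) of a syndrome table afforded by τ and e
is finite of cardinality at most ω(e). -/
theorem footprint_card_le_weight
    (q : ℕ) (hq : IsPrimePow q)
    (F : Type) [Field F] [Fintype F] (hF : Fintype.card F = q)
    (L : Type) [Field L] [Algebra F L]
    (r₁ r₂ : ℕ) (hr₁ : 0 < r₁) (hr₂ : 0 < r₂) (hco : Nat.Coprime q (r₁ * r₂))
    (α₁ α₂ : L) (hα₁ : IsPrimitiveRoot α₁ r₁) (hα₂ : IsPrimitiveRoot α₂ r₂)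
    (T : MonOrd) (e : Fin r₁ × Fin r₂ → F) (τ : Fin r₁ × Fin r₂)
    (U : ℕ × ℕ → L) (hU : U = synTable α₁ α₂ τ e) :
    {n : ℕ × ℕ | ¬ ∃ (f : (ℕ × ℕ) →₀ L) (s : ℕ × ℕ),
        GeneratesU T U f ∧ IsLP T f s ∧ s.1 ≤ n.1 ∧ s.2 ≤ n.2}.Finite ∧
    {n : ℕ × ℕ | ¬ ∃ (f : (ℕ × ℕ) →₀ L) (s : ℕ × ℕ),
        GeneratesU T U f ∧ IsLP T f s ∧ s.1 ≤ n.1 ∧ s.2 ≤ n.2}.ncard ≤ wt e := by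
  classical
  set Δ : Set (ℕ × ℕ) := {n : ℕ × ℕ | ¬ ∃ (f : (ℕ × ℕ) →₀ L) (s : ℕ × ℕ),
        GeneratesU T U f ∧ IsLP T f s ∧ s.1 ≤ n.1 ∧ s.2 ≤ n.2} with hΔ
  -- every finset inside Δ has cardinality at most wt e
  have key : ∀ t : Finset (ℕ × ℕ), ↑t ⊆ Δ → t.card ≤ wt e := by
    intro t ht
    -- the monomials indexed by t are linearly independent as functions on
    -- the support of e
    have hli : LinearIndependent L
        (fun (i : ↥t) (p : {p : Fin r₁ × Fin r₂ // e p ≠ 0}) =>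
          (α₁ ^ ((p.1.1 : ℕ))) ^ (i : ℕ × ℕ).1 * (α₂ ^ ((p.1.2 : ℕ))) ^ (i : ℕ × ℕ).2) := by
      rw [Fintype.linearIndependent_iff]
      intro g hg
      by_contra hcon
      push_neg at hcon
      obtain ⟨i₀, hi₀⟩ := hcon
      -- build the polynomial with coefficients g
      set f : (ℕ × ℕ) →₀ L := Finsupp.onFinset t
        (fun n => if h : n ∈ t then g ⟨n, h⟩ else 0)
        (by intro n hn; by_contra hnt; simp [hnt] at hn) with hfdef
      have hfapp : ∀ i : ↥t, f i.1 = g i := by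
        intro i
        simp [hfdef, Finsupp.onFinset_apply, i.2]
      have hf : f ≠ 0 := by
        intro h0
        apply hi₀
        rw [← hfapp i₀, h0]
        rfl
      have hsupp : f.support ⊆ t := Finsupp.support_onFinset_subset
      have hvz : ∀ p : Fin r₁ × Fin r₂, e p ≠ 0 →
          polyEval f (α₁ ^ (p.1 : ℕ)) (α₂ ^ (p.2 : ℕ)) = 0 := by
        intro p hp
        have hgp := congrFun hg ⟨p, hp⟩
        simp only [Finset.sum_apply, Pi.smul_apply, smul_eq_mul, Pi.zero_apply] at hgp
        unfold polyEval
        rw [Finset.sum_subset hsupp (by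
          intro m _ hm
          rw [Finsupp.notMem_support_iff.1 hm, zero_mul, zero_mul])]
        rw [← Finset.sum_attach t
          (fun m => f m * (α₁ ^ (p.1 : ℕ)) ^ m.1 * (α₂ ^ (p.2 : ℕ)) ^ m.2)]
        rw [← hgp]
        apply Finset.sum_congr rfl
        intro i _
        rw [hfapp i]
        ring
      have hgen := generates_of_vanish α₁ α₂ τ e T f hf hvz
      obtain ⟨s, hLP, hall⟩ := hgen
      have hst : s ∈ t := hsupp hLP.1
      have hsΔ : s ∈ Δ := ht hst
      exact hsΔ ⟨f, s, hU ▸ ⟨s, hLP, hall⟩, hLP, le_refl _, le_refl _⟩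
    have hcard := hli.fintype_card_le_finrank
    rw [Fintype.card_coe] at hcard
    have hrank : Module.finrank L ({p : Fin r₁ × Fin r₂ // e p ≠ 0} → L) =
        Fintype.card {p : Fin r₁ × Fin r₂ // e p ≠ 0} :=
      Module.finrank_pi L
    have hwt : wt e = Fintype.card {p : Fin r₁ × Fin r₂ // e p ≠ 0} := by
      unfold wt
      rw [← Nat.card_coe_set_eq, Nat.card_eq_fintype_card]
      rfl
    rw [hrank] at hcard
    omega
  have hfin : Δ.Finite := by
    by_contra hinf
    have hinf' : Δ.Infinite := hinf
    obtain ⟨t, hts, htc⟩ := hinf'.exists_subset_card_eq (wt e + 1)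
    have := key t hts
    omega
  refine ⟨hfin, ?_⟩
  rw [Set.ncard_eq_toFinset_card Δ hfin]
  exact key hfin.toFinset (by simp)
end

section
/- Let ≤_T be the lexicographic order with X₁ > X₂. Let e ∈ 𝔽(r₁,r₂) and τ ∈ 𝓘, let U be the syndrome table afforded by τ and e, and suppose ω(e) ≤ t ≤ 4, t ≥ 1, t ≤ ⌊r₁/2⌋, t ≤ ⌊r₂/2⌋, and u_{(0,j)} ≠ 0 for some j < t. Let F = {f^(1),…,f^(d)} ⊆ L[X₁,X₂] be a minimal set of polynomials for the subarray of U indexed by B(2t+1): the defining points s^(i) = LP(f^(i)) satisfy s^(1)_1 > … > s^(d)_1 = 0 and 0 = s^(1)_2 < … < s^(d)_2; each f^(i) satisfies f^(i)[U]_k = 0 for every k ∈ B(2t+1) with s^(i) ⪯ k; and every nonzero g ∈ L[X₁,X₂] with LP(g) ∈ ∪_{i=1}^{d−1}{n : n ⪯ (s^(i)_1 − 1, s^(i+1)_2 − 1)} satisfies g[U]_k ≠ 0 for some k ∈ B(2t+1) with LP(g) ⪯ k. Then F is a Gröbner basis of the ideal Λ(U) with respect to ≤_T. -/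
/-! The syndrome table is a sum `u_n = ∑_{Q ∈ S} c_Q Q₁^{n₁} Q₂^{n₂}` over the at most `t` error
locations `Q = α^p`, so a polynomial `g` generates it as soon as `c_Q g(Q) = 0` on `S`. For the lex
order the vanishing ideal of `S` has footprint `Δ(S) = {(a, b) | b < μ a}`, where `μ a` counts the
horizontal fibres of `S` with more than `a` points, and it contains a polynomial with leading
exponent `(a, μ a)` for every `a`. Minimality of the `f⁽ⁱ⁾` keeps these leading exponents out of
the region below the staircase of the `s⁽ⁱ⁾`, so the two predecessors of every corner `s⁽ⁱ⁾` lie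
in `Δ(S)`, and for `|S| ≤ t ≤ 4` a case check puts `s⁽ⁱ⁾ + Δ(S)` inside `B(2t+1)`. There
`f⁽ⁱ⁾[U]` vanishes, and since the monomials of `Δ(S)` separate the points of `S` (Vandermonde along
the fibres), `c_Q f⁽ⁱ⁾(Q) = 0` for all `Q`: `f⁽ⁱ⁾` generates `U`. Conversely, a generator of `U`
with leading exponent below the staircase would contradict minimality. -/

open Finset Polynomial
open scoped Polynomial.Bivariate

theorem IsLP.unique {L : Type} [Field L] {T : MonOrd} {f : (ℕ × ℕ) →₀ L} {s s' : ℕ × ℕ}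
    (h : IsLP T f s) (h' : IsLP T f s') : s = s' :=
  T.antisymm _ _ (h'.2 s h.1) (h.2 s' h'.1)

theorem eq_zero_of_forall_sum_mul_pow_eq_zero {L ι : Type*} [Field L] [DecidableEq ι]
    (s : Finset ι) {x : ι → L} (hx : Set.InjOn x s) {v : ι → L}
    (hv : ∀ a < #s, ∑ i ∈ s, v i * x i ^ a = 0) : ∀ i ∈ s, v i = 0 := by
  intro i hi
  have hdeg : (Lagrange.basis s x i).natDegree < #s := by
    rw [Lagrange.natDegree_basis hx hi]
    exact Nat.sub_lt (card_pos.2 ⟨i, hi⟩) one_pos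
  calc v i = ∑ j ∈ s, v j * (Lagrange.basis s x i).eval (x j) := by
        rw [sum_eq_single_of_mem i hi fun j hj hji => by
          rw [Lagrange.eval_basis_of_ne hji.symm hj, mul_zero], Lagrange.eval_basis_self hx hi,
          mul_one]
    _ = ∑ a ∈ range #s, (Lagrange.basis s x i).coeff a * ∑ j ∈ s, v j * x j ^ a := by
        simp_rw [eval_eq_sum_range' hdeg, mul_sum]
        rw [sum_comm]
        refine sum_congr rfl fun j _ => sum_congr rfl fun a _ => by ring
    _ = 0 := sum_eq_zero fun a ha => by rw [hv a (mem_range.1 ha), mul_zero]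

section Footprint

variable {L : Type*} [DecidableEq L]

/-- `{(a, b) | b < footprintHeight S a}` is the footprint of the vanishing ideal of `S` for the
lexicographic order with `X₁ > X₂`: column `a` has one cell for each `y`-value whose fibre in `S`
has more than `a` points. -/
def footprintHeight (S : Finset (L × L)) (a : ℕ) : ℕ :=
  #{η ∈ S.image Prod.snd | a < #{Q ∈ S | Q.2 = η}}

theorem footprintHeight_antitone (S : Finset (L × L)) : Antitone (footprintHeight S) :=
  fun _ _ hab => card_le_card fun _ h => mem_filter.2 ⟨(mem_filter.1 h).1,
    hab.trans_lt (mem_filter.1 h).2⟩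

theorem sum_footprintHeight_le (S : Finset (L × L)) (n : ℕ) :
    ∑ a ∈ range n, footprintHeight S a ≤ #S := by
  calc ∑ a ∈ range n, footprintHeight S a
      = ∑ η ∈ S.image Prod.snd, #{a ∈ range n | a < #{Q ∈ S | Q.2 = η}} := by
        simp only [footprintHeight, card_filter]
        exact sum_comm
    _ ≤ ∑ η ∈ S.image Prod.snd, #{Q ∈ S | Q.2 = η} :=
        sum_le_sum fun η _ => (card_le_card fun a ha => mem_range.2 (mem_filter.1 ha).2).trans
          (card_range _).le
    _ = #S := (card_eq_sum_card_image _ _).symm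

theorem footprintHeight_filter_ne_lt (S : Finset (L × L)) {η : L}
    (hmax : ∀ P ∈ S, #{R ∈ S | R.2 = P.2} ≤ #{R ∈ S | R.2 = η}) {a : ℕ}
    (ha : 0 < footprintHeight {P ∈ S | P.2 ≠ η} a) :
    footprintHeight {P ∈ S | P.2 ≠ η} a < footprintHeight S a := by
  obtain ⟨η', hη'⟩ := card_pos.1 ha
  simp only [mem_filter, mem_image] at hη'
  obtain ⟨⟨P, ⟨hP, -⟩, rfl⟩, hP'⟩ := hη'
  have hlt : a < #{Q ∈ S | Q.2 = η} :=
    hP'.trans_le ((card_le_card (monotone_filter_left _ (filter_subset _ _))).trans (hmax P hP))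
  have hη : η ∈ {η ∈ S.image Prod.snd | a < #{Q ∈ S | Q.2 = η}} := by
    obtain ⟨Q, hQ⟩ := card_pos.1 (Nat.zero_lt_of_lt hlt)
    exact mem_filter.2 ⟨mem_image.2 ⟨Q, (mem_filter.1 hQ).1, (mem_filter.1 hQ).2⟩, hlt⟩
  refine lt_of_le_of_lt (card_le_card fun η' hη' => ?_) (card_erase_lt_of_mem hη)
  simp only [mem_filter, mem_image] at hη'
  obtain ⟨⟨Q, ⟨hQ, hQη⟩, rfl⟩, hlt'⟩ := hη'
  refine mem_erase.2 ⟨hQη, mem_filter.2 ⟨mem_image_of_mem _ hQ, hlt'.trans_le ?_⟩⟩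
  exact card_le_card (monotone_filter_left _ (filter_subset _ _))

/-- Induction on `S`: removing a largest fibre, over `η`, lowers every nonzero column of the
footprint, so `v · (Y - η)` satisfies the hypothesis on the rest of `S`; on the fibre itself the
claim is univariate Vandermonde. -/
theorem eq_zero_of_forall_footprint_sum_mul_pow_eq_zero [Field L] (S : Finset (L × L))
    {v : L × L → L}
    (hv : ∀ a b, b < footprintHeight S a → ∑ Q ∈ S, v Q * Q.1 ^ a * Q.2 ^ b = 0) :
    ∀ Q ∈ S, v Q = 0 := by
  induction S using Finset.strongInduction generalizing v with
  | H S ih =>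
  intro Q hQ
  obtain ⟨Q₀, hQ₀, hmax⟩ := S.exists_max_image (fun P => #{R ∈ S | R.2 = P.2}) ⟨Q, hQ⟩
  set η := Q₀.2
  have hrest : ∀ P ∈ S, P.2 ≠ η → v P = 0 := by
    have hS' : {P ∈ S | P.2 ≠ η} ⊂ S := filter_ssubset.2 ⟨Q₀, hQ₀, not_not.2 rfl⟩
    have := ih _ hS' (v := fun P => v P * (P.2 - η)) fun a b hb => by
      have hb' := footprintHeight_filter_ne_lt S hmax (a := a) (by omega)
      calc ∑ P ∈ S with P.2 ≠ η, v P * (P.2 - η) * P.1 ^ a * P.2 ^ b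
          = ∑ P ∈ S, v P * (P.2 - η) * P.1 ^ a * P.2 ^ b :=
            sum_subset (filter_subset _ _) fun P hP hP' => by
              rw [not_ne_iff.1 fun h => hP' (mem_filter.2 ⟨hP, h⟩), sub_self]; ring
        _ = ∑ P ∈ S, v P * P.1 ^ a * P.2 ^ (b + 1) - η * ∑ P ∈ S, v P * P.1 ^ a * P.2 ^ b := by
            rw [mul_sum, ← sum_sub_distrib]
            exact sum_congr rfl fun P _ => by ring
        _ = 0 := by rw [hv a (b + 1) (by omega), hv a b (by omega), mul_zero, sub_zero]
    exact fun P hP hPη => (mul_eq_zero.1 (this P (mem_filter.2 ⟨hP, hPη⟩))).resolve_right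
      (sub_ne_zero.2 hPη)
  have hfibre : ∀ P ∈ S, P.2 = η → v P = 0 := by
    have hinj : Set.InjOn Prod.fst (({P ∈ S | P.2 = η} : Finset (L × L)) : Set (L × L)) :=
      fun P hP P' hP' h => Prod.ext h <| by
        rw [mem_coe, mem_filter] at hP hP'
        rw [hP.2, hP'.2]
    refine fun P hP hPη => eq_zero_of_forall_sum_mul_pow_eq_zero _ hinj (fun a ha => ?_) P
      (mem_filter.2 ⟨hP, hPη⟩)
    have hpos : 0 < footprintHeight S a :=
      card_pos.2 ⟨η, mem_filter.2 ⟨mem_image_of_mem _ hQ₀, ha⟩⟩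
    calc ∑ P ∈ S with P.2 = η, v P * P.1 ^ a
        = ∑ P ∈ S, v P * P.1 ^ a * P.2 ^ 0 := by
          simp only [pow_zero, mul_one]
          exact sum_subset (filter_subset _ _) fun P hP hP' => by
            rw [hrest P hP fun h => hP' (mem_filter.2 ⟨hP, h⟩), zero_mul]
      _ = 0 := hv a 0 hpos
  by_cases hQη : Q.2 = η
  · exact hfibre Q hQ hQη
  · exact hrest Q hQ hQη

end Footprint

section Bivariate

variable {L : Type} [Field L]

/-- Reads `p : L[X][Y]` as a polynomial in `X₁ := Y` and `X₂ := X`; in `evalEval x y p` the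
first argument is the value of `X`. -/
noncomputable def toFinsuppProd (p : L[X][Y]) : (ℕ × ℕ) →₀ L :=
  (p.toFinsupp.coeff.mapRange (fun q => q.toFinsupp.coeff) rfl).uncurry

theorem toFinsuppProd_apply (p : L[X][Y]) (a b : ℕ) :
    toFinsuppProd p (a, b) = (p.coeff a).coeff b :=
  rfl

theorem polyEval_toFinsuppProd (p : L[X][Y]) (x y : L) :
    polyEval (toFinsuppProd p) x y = p.evalEval y x := by
  have h := Finsupp.sum_uncurry_index (p.toFinsupp.coeff.mapRange (fun q => q.toFinsupp.coeff) rfl)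
    (fun m c => c * x ^ m.1 * y ^ m.2)
  erw [Finsupp.sum_mapRange_index (by simp)] at h
  rw [← eval₂_evalRingHom, eval₂_eq_sum]
  refine h.trans (sum_congr (support_toFinsupp p) fun a _ => ?_)
  simp only [coe_evalRingHom, eval_eq_sum, Polynomial.sum, sum_mul]
  exact sum_congr (support_toFinsupp _) fun b _ => by
    change (p.coeff a).coeff b * x ^ a * y ^ b = _
    ring

theorem isLP_lex_toFinsuppProd {p : L[X][Y]} (hp : p ≠ 0) :
    IsLP lexMonOrd (toFinsuppProd p) (p.natDegree, p.leadingCoeff.natDegree) := by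
  refine ⟨?_, fun ⟨a, b⟩ hab => ?_⟩
  · rw [Finsupp.mem_support_iff, toFinsuppProd_apply]
    exact leadingCoeff_ne_zero.2 (leadingCoeff_ne_zero.2 hp)
  · rw [Finsupp.mem_support_iff, toFinsuppProd_apply] at hab
    have ha : a ≤ p.natDegree := le_natDegree_of_ne_zero fun h : p.coeff a = 0 => hab (by simp [h])
    rcases ha.lt_or_eq with ha | rfl
    · exact Or.inl ha
    · exact Or.inr ⟨rfl, le_natDegree_of_ne_zero hab⟩

variable [DecidableEq L]

theorem exists_degree_lt_evalEval_eq_pow (S : Finset (L × L)) (c : ℕ)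
    (hS : ∀ Q ∈ S, #{P ∈ S | P.2 = Q.2} ≤ c) :
    ∃ q : L[X][Y], q.degree < c ∧ ∀ Q ∈ S, q.evalEval Q.2 Q.1 = Q.1 ^ c := by
  let T := S.image Prod.snd
  let interp : L → L[X] := fun η =>
    Lagrange.interpolate ({P ∈ S | P.2 = η}.image Prod.fst) id (· ^ c)
  refine ⟨∑ η ∈ T, (interp η).map C * C (Lagrange.basis T id η), ?_, fun Q hQ => ?_⟩
  · refine (degree_sum_le _ _).trans_lt
      ((Finset.sup_lt_iff (WithBot.bot_lt_coe c)).2 fun η hη => ?_)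
    obtain ⟨Q, hQ, rfl⟩ := mem_image.1 hη
    rw [degree_mul_C (Lagrange.basis_ne_zero (Set.injOn_id _) hη)]
    calc ((interp Q.2).map C).degree ≤ (interp Q.2).degree := degree_map_le
      _ < #({P ∈ S | P.2 = Q.2}.image Prod.fst) := Lagrange.degree_interpolate_lt _ (Set.injOn_id _)
      _ ≤ c := by exact_mod_cast card_image_le.trans (hS Q hQ)
  · have hQT : Q.2 ∈ T := mem_image_of_mem _ hQ
    have hbasis := Lagrange.eval_basis_self (Set.injOn_id (T : Set L)) hQT
    have hQ₁ : Q.1 ∈ {P ∈ S | P.2 = Q.2}.image Prod.fst := mem_image_of_mem _ (by simp [hQ])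
    have hinterp := Lagrange.eval_interpolate_at_node (fun x : L => x ^ c) (Set.injOn_id _) hQ₁
    rw [id_eq] at hbasis hinterp
    rw [evalEval_finsetSum, sum_eq_single_of_mem Q.2 hQT fun η _ hη => by
      rw [evalEval_mul, evalEval_C, ← id_eq Q.2, Lagrange.eval_basis_of_ne hη hQT, mul_zero]]
    rw [evalEval_mul, evalEval_map_C, evalEval_C, hinterp, hbasis, mul_one]

theorem exists_isLP_footprintHeight (S : Finset (L × L)) (c : ℕ) :
    ∃ g, IsLP lexMonOrd g (c, footprintHeight S c) ∧ ∀ Q ∈ S, polyEval g Q.1 Q.2 = 0 := by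
  obtain ⟨q, hq, hqS⟩ := exists_degree_lt_evalEval_eq_pow
    {Q ∈ S | #{P ∈ S | P.2 = Q.2} ≤ c} c fun Q hQ =>
      (card_le_card (monotone_filter_left _ (filter_subset _ _))).trans (mem_filter.1 hQ).2
  let π : L[X] := ∏ η ∈ S.image Prod.snd with c < #{Q ∈ S | Q.2 = η}, (X - C η)
  have hπ : π.Monic := monic_prod_of_monic _ _ fun η _ => monic_X_sub_C η
  have hmon : (X ^ c - q).Monic := monic_X_pow_sub hq
  have hg : C π * (X ^ c - q) ≠ 0 := mul_ne_zero (C_ne_zero.2 hπ.ne_zero) hmon.ne_zero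
  refine ⟨toFinsuppProd (C π * (X ^ c - q)), ?_, fun Q hQ => ?_⟩
  · convert isLP_lex_toFinsuppProd hg using 2
    · rw [natDegree_C_mul hπ.ne_zero, natDegree_eq_of_degree_eq_some
        ((degree_sub_eq_left_of_degree_lt (by rwa [degree_X_pow])).trans (degree_X_pow c))]
    · rw [leadingCoeff_mul, leadingCoeff_C, hmon.leadingCoeff, mul_one,
        natDegree_prod_of_monic _ _ fun η _ => monic_X_sub_C η]
      simp [footprintHeight]
  · rw [polyEval_toFinsuppProd, evalEval_mul, evalEval_C, evalEval_sub, evalEval_pow, evalEval_X]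
    by_cases hQc : #{P ∈ S | P.2 = Q.2} ≤ c
    · rw [hqS Q (mem_filter.2 ⟨hQ, hQc⟩), sub_self, mul_zero]
    · have hπQ : π.eval Q.2 = 0 := by
        rw [eval_prod]
        exact prod_eq_zero (mem_filter.2 ⟨mem_image_of_mem _ hQ, not_le.1 hQc⟩) (by simp)
      rw [hπQ, zero_mul]

end Bivariate

section ExpSum

variable {L : Type} [Field L]

def expSum (S : Finset (L × L)) (c : L × L → L) (n : ℕ × ℕ) : L :=
  ∑ Q ∈ S, c Q * Q.1 ^ n.1 * Q.2 ^ n.2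

theorem fApp_expSum_add (S : Finset (L × L)) (c : L × L → L) (g : (ℕ × ℕ) →₀ L)
    (s k : ℕ × ℕ) :
    fApp (expSum S c) g s (s + k) =
      ∑ Q ∈ S, c Q * Q.1 ^ k.1 * Q.2 ^ k.2 * polyEval g Q.1 Q.2 := by
  rw [fApp, if_pos ⟨by simp, by simp⟩]
  simp only [expSum, polyEval, Prod.fst_add, Prod.snd_add, mul_sum]
  rw [sum_comm]
  refine sum_congr rfl fun Q _ => sum_congr rfl fun m _ => ?_
  rw [show m.1 + (s.1 + k.1) - s.1 = m.1 + k.1 by omega,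
    show m.2 + (s.2 + k.2) - s.2 = m.2 + k.2 by omega]
  ring

theorem fApp_expSum_eq_zero {S : Finset (L × L)} {c : L × L → L} {g : (ℕ × ℕ) →₀ L}
    (h : ∀ Q ∈ S, c Q * polyEval g Q.1 Q.2 = 0) (s n : ℕ × ℕ) :
    fApp (expSum S c) g s n = 0 := by
  by_cases hsn : s.1 ≤ n.1 ∧ s.2 ≤ n.2
  · obtain ⟨k, rfl⟩ : ∃ k, n = s + k :=
      ⟨(n.1 - s.1, n.2 - s.2), Prod.ext (by simp; omega) (by simp; omega)⟩
    rw [fApp_expSum_add]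
    exact sum_eq_zero fun Q hQ => by linear_combination (Q.1 ^ k.1 * Q.2 ^ k.2) * h Q hQ
  · rw [fApp, if_neg hsn]

theorem mul_polyEval_eq_zero_of_fApp_expSum [DecidableEq L] {S : Finset (L × L)}
    {c : L × L → L} {g : (ℕ × ℕ) →₀ L} {s : ℕ × ℕ}
    (h : ∀ a b, b < footprintHeight S a → fApp (expSum S c) g s (s + (a, b)) = 0) :
    ∀ Q ∈ S, c Q * polyEval g Q.1 Q.2 = 0 :=
  eq_zero_of_forall_footprint_sum_mul_pow_eq_zero S fun a b hb => by
    rw [← h a b hb, fApp_expSum_add]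
    exact sum_congr rfl fun Q _ => by ring

theorem exists_synTable_eq_expSum {F : Type} [Field F] [Algebra F L] {r₁ r₂ : ℕ} (α₁ α₂ : L)
    (τ : Fin r₁ × Fin r₂) (e : Fin r₁ × Fin r₂ → F) :
    ∃ S c, #S ≤ wt e ∧ synTable α₁ α₂ τ e = expSum S c := by
  classical
  let point : Fin r₁ × Fin r₂ → L × L := fun p => (α₁ ^ (p.1 : ℕ), α₂ ^ (p.2 : ℕ))
  let supp : Finset (Fin r₁ × Fin r₂) := {p | e p ≠ 0}
  let w : Fin r₁ × Fin r₂ → L := fun p =>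
    algebraMap F L (e p) * α₁ ^ ((τ.1 : ℕ) * p.1) * α₂ ^ ((τ.2 : ℕ) * p.2)
  refine ⟨supp.image point, fun Q => ∑ p ∈ supp with point p = Q, w p, ?_, funext fun n => ?_⟩
  · calc #(supp.image point) ≤ #supp := card_image_le
      _ = wt e := by rw [wt, Set.ncard_eq_toFinset_card', Set.toFinset_ofPred]
  calc synTable α₁ α₂ τ e n = ∑ p ∈ supp, w p * (point p).1 ^ n.1 * (point p).2 ^ n.2 := by
        rw [synTable, sum_filter]
        refine sum_congr rfl fun p _ => ?_
        split_ifs with hp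
        · ring
        · simp [not_ne_iff.1 hp]
    _ = ∑ Q ∈ supp.image point, ∑ p ∈ supp with point p = Q,
          w p * (point p).1 ^ n.1 * (point p).2 ^ n.2 :=
        (sum_fiberwise_of_maps_to (fun p hp => mem_image_of_mem point hp) _).symm
    _ = expSum (supp.image point) (fun Q => ∑ p ∈ supp with point p = Q, w p) n := by
        simp only [expSum, sum_mul]
        exact sum_congr rfl fun Q _ => sum_congr rfl fun p hp => by rw [(mem_filter.1 hp).2]

end ExpSum

section Staircase

variable {d : ℕ} {s : Fin d → ℕ × ℕ}

def InStaircase (s : Fin d → ℕ × ℕ) (n : ℕ × ℕ) : Prop :=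
  ∃ i : Fin d, ∃ h : i.1 + 1 < d, n.1 ≤ (s i).1 - 1 ∧ n.2 ≤ (s ⟨i.1 + 1, h⟩).2 - 1

theorem InStaircase.mono {n m : ℕ × ℕ} (h : InStaircase s n) (h₁ : m.1 ≤ n.1) (h₂ : m.2 ≤ n.2) :
    InStaircase s m :=
  let ⟨i, hi, hn₁, hn₂⟩ := h
  ⟨i, hi, h₁.trans hn₁, h₂.trans hn₂⟩

theorem inStaircase_pred_fst (hd : 0 < d) (hlast : (s ⟨d - 1, Nat.sub_lt hd Nat.one_pos⟩).1 = 0)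
    (hmono : StrictMono fun i => (s i).2) {i : Fin d} (hi : 0 < (s i).1) :
    InStaircase s ((s i).1 - 1, (s i).2) := by
  have hid : i.1 + 1 < d := by
    by_contra h
    rw [show i = ⟨d - 1, Nat.sub_lt hd Nat.one_pos⟩ from Fin.ext (show i.1 = d - 1 by omega),
      hlast] at hi
    exact hi.ne' rfl
  have := @hmono i ⟨i.1 + 1, hid⟩ (Fin.mk_lt_mk.2 i.1.lt_succ_self)
  exact ⟨i, hid, le_rfl, by dsimp only at this ⊢; omega⟩

theorem inStaircase_pred_snd (hd : 0 < d) (hfirst : (s ⟨0, hd⟩).2 = 0)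
    (hanti : StrictAnti fun i => (s i).1) {i : Fin d} (hi : 0 < (s i).2) :
    InStaircase s ((s i).1, (s i).2 - 1) := by
  have hi0 : 0 < i.1 := by
    by_contra h
    rw [show i = ⟨0, hd⟩ from Fin.ext (show i.1 = 0 by omega), hfirst] at hi
    exact hi.ne' rfl
  have hprev : (⟨i.1 - 1 + 1, by omega⟩ : Fin d) = i := Fin.ext (by simp only; omega)
  have := @hanti ⟨i.1 - 1, by omega⟩ i (Fin.mk_lt_of_lt_val (by omega))
  exact ⟨⟨i.1 - 1, by omega⟩, by simp only; omega, by dsimp only at this ⊢; omega,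
    by rw [hprev]⟩

theorem exists_le_of_not_inStaircase (hd : 0 < d)
    (hlast : (s ⟨d - 1, Nat.sub_lt hd Nat.one_pos⟩).1 = 0) (hfirst : (s ⟨0, hd⟩).2 = 0)
    {n : ℕ × ℕ} (hn : ¬ InStaircase s n) : ∃ i, (s i).1 ≤ n.1 ∧ (s i).2 ≤ n.2 := by
  let A : Finset (Fin d) := {i | (s i).1 ≤ n.1}
  have hA : A.Nonempty := ⟨_, mem_filter.2 ⟨mem_univ _, hlast ▸ Nat.zero_le _⟩⟩
  have hi := (mem_filter.1 (A.min'_mem hA)).2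
  refine ⟨A.min' hA, hi, ?_⟩
  rcases Nat.eq_zero_or_pos (A.min' hA).1 with h0 | hpos
  · rw [show A.min' hA = ⟨0, hd⟩ from Fin.ext h0, hfirst]
    exact Nat.zero_le _
  -- The previous corner lies strictly to the right of `n`, so `n` would be in the box below it.
  have hj : ¬ (s ⟨(A.min' hA).1 - 1, by omega⟩).1 ≤ n.1 := fun h =>
    absurd (A.min'_le _ (mem_filter.2 ⟨mem_univ _, h⟩)) (by rw [Fin.le_def]; simp only; omega)
  have hnext : (⟨(A.min' hA).1 - 1 + 1, by omega⟩ : Fin d) = A.min' hA :=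
    Fin.ext (by simp only; omega)
  by_contra h
  exact hn ⟨⟨(A.min' hA).1 - 1, by omega⟩, by simp only; omega, by omega, by rw [hnext]; omega⟩

end Staircase

theorem corner_add_footprint_bound {μ : ℕ → ℕ} (hμ : Antitone μ) {t : ℕ} (ht : t ≤ 4)
    (hsum : ∑ a ∈ range 5, μ a ≤ t) {s₁ s₂ a b : ℕ} (h₁ : 0 < s₁ → s₂ < μ (s₁ - 1))
    (h₂ : 0 < s₂ → s₂ - 1 < μ s₁) (hb : b < μ a) :
    (s₁ + a + 1) * (s₂ + b + 1) ≤ 2 * t + 1 ∧ s₁ + a < 2 * t ∧ s₂ + b < 2 * t := by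
  simp only [sum_range_succ, sum_range_zero, zero_add] at hsum
  have h01 := hμ (zero_le_one : 0 ≤ 1)
  have h12 := hμ (by norm_num : 1 ≤ 2)
  have h23 := hμ (by norm_num : 2 ≤ 3)
  have h34 := hμ (by norm_num : 3 ≤ 4)
  have hvanish : ∀ x, 4 ≤ x → μ x = 0 := fun x hx => by have := hμ hx; omega
  have ha : a ≤ 3 := by
    by_contra h
    rw [hvanish a (by omega)] at hb
    omega
  rcases s₁ with _ | k
  · interval_cases a <;> omega
  · have hk := h₁ k.succ_pos
    rw [Nat.add_sub_cancel] at hk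
    have : k ≤ 3 := by
      by_contra h
      rw [hvanish k (by omega)] at hk
      omega
    interval_cases k <;> interval_cases a <;> simp only [Nat.reduceAdd] at h₂ <;> omega

theorem mem_hypB_of_mul_le {r₁ r₂ t x y : ℕ} (htr1 : t ≤ r₁ / 2) (htr2 : t ≤ r₂ / 2)
    (h : (x + 1) * (y + 1) ≤ 2 * t + 1) (hx : x < 2 * t) (hy : y < 2 * t) :
    (x, y) ∈ hypB r₁ r₂ (2 * t + 1) := by
  refine ⟨by omega, by omega, h, ?_, ?_⟩ <;> simp only [ne_eq, Prod.mk.injEq] <;> omega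

theorem groebner_from_hyperbolic_lex_general
    (F : Type) [Field F]
    (L : Type) [Field L] [Algebra F L]
    (r₁ r₂ : ℕ)
    (α₁ α₂ : L)
    (t : ℕ) (ht4 : t ≤ 4) (htr1 : t ≤ r₁ / 2) (htr2 : t ≤ r₂ / 2)
    (e : Fin r₁ × Fin r₂ → F) (hω : wt e ≤ t) (τ : Fin r₁ × Fin r₂)
    (U : ℕ × ℕ → L) (hU : U = synTable α₁ α₂ τ e)
    (d : ℕ) (hd : 0 < d)
    (f : Fin d → (ℕ × ℕ) →₀ L) (s : Fin d → ℕ × ℕ)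
    (hLP : ∀ i, IsLP lexMonOrd (f i) (s i))
    (hdec1 : ∀ i j : Fin d, i < j → (s j).1 < (s i).1)
    (hlast1 : (s ⟨d - 1, Nat.sub_lt hd Nat.one_pos⟩).1 = 0)
    (hinc2 : ∀ i j : Fin d, i < j → (s i).2 < (s j).2)
    (hfirst2 : (s ⟨0, hd⟩).2 = 0)
    (hgen : ∀ i : Fin d, ∀ k ∈ hypB r₁ r₂ (2 * t + 1),
      (s i).1 ≤ k.1 → (s i).2 ≤ k.2 → fApp U (f i) (s i) k = 0)
    (hmin : ∀ (g : (ℕ × ℕ) →₀ L) (sg : ℕ × ℕ), IsLP lexMonOrd g sg →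
      (∃ i : Fin d, ∃ h : i.1 + 1 < d,
        sg.1 ≤ (s i).1 - 1 ∧ sg.2 ≤ (s ⟨i.1 + 1, h⟩).2 - 1) →
      ∃ k ∈ hypB r₁ r₂ (2 * t + 1), sg.1 ≤ k.1 ∧ sg.2 ≤ k.2 ∧ fApp U g sg k ≠ 0) :
    (∀ i : Fin d, GeneratesU lexMonOrd U (f i)) ∧
    (∀ (g : (ℕ × ℕ) →₀ L) (sg : ℕ × ℕ), IsLP lexMonOrd g sg → GeneratesU lexMonOrd U g →
      ∃ i : Fin d, (s i).1 ≤ sg.1 ∧ (s i).2 ≤ sg.2) := by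
  classical
  obtain ⟨S, c, hS, hSU⟩ := exists_synTable_eq_expSum α₁ α₂ τ e
  subst hU
  rw [hSU] at hgen hmin ⊢
  have hbelow : ∀ n, InStaircase s n → n.2 < footprintHeight S n.1 := by
    refine fun n hn => not_le.1 fun hle => ?_
    obtain ⟨g, hg, hgS⟩ := exists_isLP_footprintHeight S n.1
    obtain ⟨k, -, -, -, hk⟩ := hmin g _ hg (hn.mono le_rfl hle)
    exact hk (fApp_expSum_eq_zero (fun Q hQ => by rw [hgS Q hQ, mul_zero]) _ k)
  refine ⟨fun i => ⟨s i, hLP i, fApp_expSum_eq_zero ?_ _⟩, fun g sg hsg ⟨s', hs', hg⟩ => ?_⟩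
  · refine mul_polyEval_eq_zero_of_fApp_expSum (s := s i) fun a b hb => ?_
    obtain ⟨hmul, h₁, h₂⟩ := corner_add_footprint_bound (footprintHeight_antitone S) ht4
      ((sum_footprintHeight_le S 5).trans (hS.trans hω))
      (fun h => hbelow _ (inStaircase_pred_fst hd hlast1 (fun _ _ => hinc2 _ _) h))
      (fun h => hbelow _ (inStaircase_pred_snd hd hfirst2 (fun _ _ => hdec1 _ _) h)) hb
    exact hgen i _ (mem_hypB_of_mul_le htr1 htr2 hmul h₁ h₂) le_self_add le_self_add
  · obtain rfl := hs'.unique hsg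
    exact exists_le_of_not_inStaircase hd hlast1 hfirst2 fun hin =>
      let ⟨k, _, _, _, hk⟩ := hmin g s' hsg hin
      hk (hg k)

/-- under the lexicographic order (X₁ > X₂), a minimal set of polynomials
for the subarray of the syndrome table indexed by B(2t+1) is a Gröbner basis of Λ(U). -/
theorem groebner_from_hyperbolic_lex
    (q : ℕ) (hq : IsPrimePow q)
    (F : Type) [Field F] [Fintype F] (hF : Fintype.card F = q)
    (L : Type) [Field L] [Algebra F L]
    (r₁ r₂ : ℕ) (hr₁ : 0 < r₁) (hr₂ : 0 < r₂) (hco : Nat.Coprime q (r₁ * r₂))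
    (α₁ α₂ : L) (hα₁ : IsPrimitiveRoot α₁ r₁) (hα₂ : IsPrimitiveRoot α₂ r₂)
    (t : ℕ) (ht1 : 1 ≤ t) (ht4 : t ≤ 4) (htr1 : t ≤ r₁ / 2) (htr2 : t ≤ r₂ / 2)
    (e : Fin r₁ × Fin r₂ → F) (hω : wt e ≤ t) (τ : Fin r₁ × Fin r₂)
    (U : ℕ × ℕ → L) (hU : U = synTable α₁ α₂ τ e)
    (hnz : ∃ j < t, U (0, j) ≠ 0)
    (d : ℕ) (hd : 0 < d)
    (f : Fin d → (ℕ × ℕ) →₀ L) (s : Fin d → ℕ × ℕ)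
    (hLP : ∀ i, IsLP lexMonOrd (f i) (s i))
    (hdec1 : ∀ i j : Fin d, i < j → (s j).1 < (s i).1)
    (hlast1 : (s ⟨d - 1, Nat.sub_lt hd Nat.one_pos⟩).1 = 0)
    (hinc2 : ∀ i j : Fin d, i < j → (s i).2 < (s j).2)
    (hfirst2 : (s ⟨0, hd⟩).2 = 0)
    (hgen : ∀ i : Fin d, ∀ k ∈ hypB r₁ r₂ (2 * t + 1),
      (s i).1 ≤ k.1 → (s i).2 ≤ k.2 → fApp U (f i) (s i) k = 0)
    (hmin : ∀ (g : (ℕ × ℕ) →₀ L) (sg : ℕ × ℕ), IsLP lexMonOrd g sg →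
      (∃ i : Fin d, ∃ h : i.1 + 1 < d,
        sg.1 ≤ (s i).1 - 1 ∧ sg.2 ≤ (s ⟨i.1 + 1, h⟩).2 - 1) →
      ∃ k ∈ hypB r₁ r₂ (2 * t + 1), sg.1 ≤ k.1 ∧ sg.2 ≤ k.2 ∧ fApp U g sg k ≠ 0) :
    (∀ i : Fin d, GeneratesU lexMonOrd U (f i)) ∧
    (∀ (g : (ℕ × ℕ) →₀ L) (sg : ℕ × ℕ), IsLP lexMonOrd g sg → GeneratesU lexMonOrd U g →
      ∃ i : Fin d, (s i).1 ≤ sg.1 ∧ (s i).2 ≤ sg.2) :=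
  groebner_from_hyperbolic_lex_general F L r₁ r₂ α₁ α₂ t ht4 htr1 htr2 e hω τ U hU d hd f s hLP
    hdec1 hlast1 hinc2 hfirst2 hgen hmin
end

section
/- Let e ∈ 𝔽(r₁,r₂), viewed inside L(r₁,r₂), and let L(e) be its locator ideal. Then the defining set of L(e) is exactly the support of e: D_α(L(e)) = supp(e). -/
/-!
A point `z = (α₁^{p₁}, α₂^{p₂})` outside the support is separated from the finitely many points of
the support by a product of linear polynomials, one `X₁ - s₁` or `X₂ - s₂` per support point `s`,
chosen in a coordinate where `s` and `z` differ. Evaluation at an `(r₁, r₂)`-th root of unity factors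
through `L(r₁, r₂)`, so the class of this product lies in the locator ideal but does not vanish at
`z`. Distinct exponents give distinct points since `α₁` and `α₂` are primitive.
-/

noncomputable def evalHom (R : Type) [CommSemiring R] (x y : R) :
    AddMonoidAlgebra R (ℕ × ℕ) →ₐ[R] R :=
  AddMonoidAlgebra.lift R R (ℕ × ℕ)
    { toFun := fun m => x ^ (Multiplicative.toAdd m).1 * y ^ (Multiplicative.toAdd m).2
      map_one' := by simp
      map_mul' := fun a b => by
        simp only [toAdd_mul, Prod.fst_add, Prod.snd_add, pow_add]
        ring }

lemma evalHom_single {R : Type} [CommSemiring R] (x y : R) (m : ℕ × ℕ) (c : R) :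
    evalHom R x y (AddMonoidAlgebra.single m c) = c * (x ^ m.1 * y ^ m.2) := by
  simp [evalHom, AddMonoidAlgebra.lift_single, smul_eq_mul]

lemma polyEval_eq_evalHom {L : Type} [Field L] (f : AddMonoidAlgebra L (ℕ × ℕ)) (x y : L) :
    polyEval f.coeff x y = evalHom L x y f := by
  rw [evalHom, AddMonoidAlgebra.lift_apply, polyEval, Finsupp.sum]
  exact Finset.sum_congr rfl fun m _ => by simp [smul_eq_mul, mul_assoc]

lemma periodIdeal_le_ker_evalHom {L : Type} [Field L] {r₁ r₂ : ℕ} {x y : L}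
    (hx : x ^ r₁ = 1) (hy : y ^ r₂ = 1) :
    periodIdeal L r₁ r₂ ≤ RingHom.ker (evalHom L x y) := by
  rw [periodIdeal, Ideal.span_le, Set.insert_subset_iff, Set.singleton_subset_iff]
  constructor <;> simp [RingHom.mem_ker, evalHom_single, hx, hy]

lemma polyEval_eq_of_mk_eq {L : Type} [Field L] {r₁ r₂ : ℕ} {x y : L}
    (hx : x ^ r₁ = 1) (hy : y ^ r₂ = 1) {f g : AddMonoidAlgebra L (ℕ × ℕ)}
    (hfg : Ideal.Quotient.mk (periodIdeal L r₁ r₂) f =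
      Ideal.Quotient.mk (periodIdeal L r₁ r₂) g) :
    polyEval f.coeff x y = polyEval g.coeff x y := by
  rw [Ideal.Quotient.mk_eq_mk_iff_sub_mem] at hfg
  have hker := periodIdeal_le_ker_evalHom hx hy hfg
  rw [RingHom.mem_ker, map_sub, sub_eq_zero] at hker
  rwa [polyEval_eq_evalHom, polyEval_eq_evalHom]

lemma exists_evalHom_eq_zero_on_ne_zero_of_notMem {R : Type} [CommRing R] [IsDomain R]
    (S : Finset (R × R)) {z : R × R} (hz : z ∉ S) :
    ∃ f : AddMonoidAlgebra R (ℕ × ℕ),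
      (∀ s ∈ S, evalHom R s.1 s.2 f = 0) ∧ evalHom R z.1 z.2 f ≠ 0 := by
  classical
  let factor : R × R → AddMonoidAlgebra R (ℕ × ℕ) := fun s =>
    if s.1 = z.1 then AddMonoidAlgebra.single (0, 1) 1 - algebraMap R _ s.2
    else AddMonoidAlgebra.single (1, 0) 1 - algebraMap R _ s.1
  have eval_factor : ∀ w s : R × R, evalHom R w.1 w.2 (factor s) =
      if s.1 = z.1 then w.2 - s.2 else w.1 - s.1 := fun w s => by
    by_cases hs : s.1 = z.1 <;> simp [factor, hs, evalHom_single]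
  refine ⟨∏ s ∈ S, factor s, fun s hs => ?_, ?_⟩
  · rw [map_prod]
    exact Finset.prod_eq_zero hs (by rw [eval_factor]; split_ifs <;> exact sub_self _)
  · rw [map_prod, Finset.prod_ne_zero_iff]
    intro s hs
    have hsz : s ≠ z := fun h => hz (h ▸ hs)
    rw [eval_factor]
    split_ifs with h₁
    · exact sub_ne_zero.mpr fun h₂ => hsz (Prod.ext h₁ h₂.symm)
    · exact sub_ne_zero.mpr (Ne.symm h₁)

lemma injective_pow_pair {L : Type} [CommMonoid L] {r₁ r₂ : ℕ} {α₁ α₂ : L}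
    (hα₁ : IsPrimitiveRoot α₁ r₁) (hα₂ : IsPrimitiveRoot α₂ r₂) :
    Function.Injective fun p : Fin r₁ × Fin r₂ => (α₁ ^ (p.1 : ℕ), α₂ ^ (p.2 : ℕ)) := by
  intro p p' h
  simp only [Prod.mk.injEq] at h
  exact Prod.ext (Fin.ext (hα₁.pow_inj p.1.isLt p'.1.isLt h.1))
    (Fin.ext (hα₂.pow_inj p.2.isLt p'.2.isLt h.2))

theorem defining_set_of_locator_eq_support_general
    (F : Type) [Field F]
    (L : Type) [Field L] [Algebra F L]
    (r₁ r₂ : ℕ)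
    (α₁ α₂ : L) (hα₁ : IsPrimitiveRoot α₁ r₁) (hα₂ : IsPrimitiveRoot α₂ r₂)
    (e : Fin r₁ × Fin r₂ → F) :
    {p : Fin r₁ × Fin r₂ |
        ∀ g ∈ {g' : AddMonoidAlgebra L (ℕ × ℕ) ⧸ periodIdeal L r₁ r₂ |
            ∀ h : AddMonoidAlgebra L (ℕ × ℕ),
              Ideal.Quotient.mk (periodIdeal L r₁ r₂) h = g' →
                ∀ p' : Fin r₁ × Fin r₂, e p' ≠ 0 →
                  polyEval h.coeff (α₁ ^ (p'.1 : ℕ)) (α₂ ^ (p'.2 : ℕ)) = 0},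
          ∀ h : AddMonoidAlgebra L (ℕ × ℕ), Ideal.Quotient.mk (periodIdeal L r₁ r₂) h = g →
            polyEval h.coeff (α₁ ^ (p.1 : ℕ)) (α₂ ^ (p.2 : ℕ)) = 0} =
      {p : Fin r₁ × Fin r₂ | e p ≠ 0} := by
  classical
  ext p
  refine ⟨fun hp => ?_, fun hep g hg h hh => hg h hh p hep⟩
  by_contra hep
  let point := fun p : Fin r₁ × Fin r₂ => (α₁ ^ (p.1 : ℕ), α₂ ^ (p.2 : ℕ))
  have hsupp : point p ∉ (Finset.univ.filter fun p' => e p' ≠ 0).image point := by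
    rwa [(injective_pow_pair hα₁ hα₂).mem_finset_image, Finset.mem_filter_univ]
  obtain ⟨f, hf_supp, hf_p⟩ := exists_evalHom_eq_zero_on_ne_zero_of_notMem _ hsupp
  refine hf_p ?_
  rw [← polyEval_eq_evalHom]
  refine hp _ (fun h hh p' hp' => ?_) f rfl
  have hroot : ∀ {r : ℕ} {α : L}, IsPrimitiveRoot α r → ∀ a : ℕ, (α ^ a) ^ r = 1 :=
    fun hα a => by rw [pow_right_comm, hα.pow_eq_one, one_pow]
  rw [polyEval_eq_of_mk_eq (hroot hα₁ _) (hroot hα₂ _) hh, polyEval_eq_evalHom]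
  exact hf_supp (point p') (Finset.mem_image_of_mem point ((Finset.mem_filter_univ p').mpr hp'))

/-- the defining set of the locator ideal L(e) is exactly supp(e). -/
theorem defining_set_of_locator_eq_support
    (q : ℕ) (hq : IsPrimePow q)
    (F : Type) [Field F] [Fintype F] (hF : Fintype.card F = q)
    (L : Type) [Field L] [Algebra F L]
    (r₁ r₂ : ℕ) (hr₁ : 0 < r₁) (hr₂ : 0 < r₂) (hco : Nat.Coprime q (r₁ * r₂))
    (α₁ α₂ : L) (hα₁ : IsPrimitiveRoot α₁ r₁) (hα₂ : IsPrimitiveRoot α₂ r₂)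
    (e : Fin r₁ × Fin r₂ → F) :
    {p : Fin r₁ × Fin r₂ |
        ∀ g ∈ {g' : AddMonoidAlgebra L (ℕ × ℕ) ⧸ periodIdeal L r₁ r₂ |
            ∀ h : AddMonoidAlgebra L (ℕ × ℕ),
              Ideal.Quotient.mk (periodIdeal L r₁ r₂) h = g' →
                ∀ p' : Fin r₁ × Fin r₂, e p' ≠ 0 →
                  polyEval h.coeff (α₁ ^ (p'.1 : ℕ)) (α₂ ^ (p'.2 : ℕ)) = 0},
          ∀ h : AddMonoidAlgebra L (ℕ × ℕ), Ideal.Quotient.mk (periodIdeal L r₁ r₂) h = g →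
            polyEval h.coeff (α₁ ^ (p.1 : ℕ)) (α₂ ^ (p.2 : ℕ)) = 0} =
      {p : Fin r₁ × Fin r₂ | e p ≠ 0} :=
  defining_set_of_locator_eq_support_general F L r₁ r₂ α₁ α₂ hα₁ hα₂ e
end

section
/- Let ≤_T be either the lexicographic order with X₁ > X₂ or the graded order with X₂ > X₁. Let 1 ≤ t ≤ 4 with t ≤ ⌊r₁/2⌋ and t ≤ ⌊r₂/2⌋, let e ∈ 𝔽(r₁,r₂) with ω(e) ≤ t, let τ ∈ 𝓘, and let U be the syndrome table afforded by τ and e. Let l = (2t−1, 0) or l = (0, 2t−1), and let F = {f^(1),…,f^(d)} be a minimal set of polynomials for u^l with defining points s^(1),…,s^(d). Assume that neither of the following holds: (i) l = (0, 2t−1), d ≥ 2, and s^(2)_2 = t; (ii) l = (2t−1, 0) and s^(1)_1 = t. Then there exists f ∈ F with LP(f) ⪯ l and f[U]_l = 0. -/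
/-! The syndrome table is an exponential sum `u_n = ∑_p e_p (α^p)^(τ+n)` over at most `t` error
positions `p`. Along the first axis, `k ↦ f[U]_(k,0)` is therefore annihilated by the recurrence
whose characteristic polynomial `σ(X₁) = ∏ (X₁ - x)` runs over the distinct values `x = α₁^p₁`, so
it vanishes at `2t-1` once it vanishes on the preceding `deg σ ≤ t` points. The same `σ` is an error
locator, so it generates `U` and, by minimality, its leading point `(deg σ, 0)` lies outside the
footprint: `s⁽¹⁾₁ ≤ deg σ`. Hence `s⁽¹⁾₁ + deg σ ≤ 2t - 1` unless `s⁽¹⁾₁ = t`. The second axis is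
symmetric, except for the case `s⁽ᵈ⁾₂ = t` with `t` distinct values `α₂^p₂`: Lagrange interpolation
then gives an error locator `X₁ - ρ(X₂)` with `deg ρ < t`, whose leading point lies in the
footprint when `d ≥ 3`, while `d = 2` is the excluded case. -/

open Polynomial Finset

namespace MonOrd

variable (T : MonOrd)

theorem le_of_le {m n : ℕ × ℕ} (h : m ≤ n) : T.le m n := by
  obtain ⟨c, rfl⟩ : ∃ c, n = m + c :=
    ⟨n - m, Prod.ext (by have := h.1; simp only [Prod.fst_add, Prod.fst_sub]; omega)
      (by have := h.2; simp only [Prod.snd_add, Prod.snd_sub]; omega)⟩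
  simpa [add_comm] using T.add_right 0 c m (T.zero_le c)

theorem lt_of_lt {m n : ℕ × ℕ} (h : m < n) : T.lt m n := ⟨T.le_of_le h.le, h.ne⟩

theorem exists_forall_le {S : Finset (ℕ × ℕ)} (hS : S.Nonempty) :
    ∃ m ∈ S, ∀ x ∈ S, T.le x m := by
  induction hS using Finset.Nonempty.cons_induction with
  | singleton a => exact ⟨a, mem_singleton_self a, by simpa using T.refl a⟩
  | cons a S ha hS ih =>
    obtain ⟨m, hm, hmax⟩ := ih
    rcases T.total a m with h | h
    · exact ⟨m, mem_cons_of_mem hm, (forall_mem_cons ha _).2 ⟨h, hmax⟩⟩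
    · exact ⟨a, mem_cons_self a S,
        (forall_mem_cons ha _).2 ⟨T.refl a, fun x hx => T.trans _ _ _ (hmax x hx) h⟩⟩

theorem exists_isLP {L : Type} [Field L] {g : (ℕ × ℕ) →₀ L} (hg : g ≠ 0) : ∃ s, IsLP T g s :=
  T.exists_forall_le (Finsupp.support_nonempty_iff.2 hg)

end MonOrd

theorem sum_mul_pow_eq_zero_of_monic {R ι : Type*} [CommRing R] [Fintype ι] (C X : ι → R)
    {P : R[X]} (hP : P.Monic) (hroot : ∀ i, C i * P.eval (X i) = 0) {N : ℕ}
    (hN : P.natDegree ≤ N)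
    (hwin : ∀ k, N - P.natDegree ≤ k → k < N → ∑ i, C i * X i ^ k = 0) :
    ∑ i, C i * X i ^ N = 0 := by
  set n := P.natDegree
  have hrec : ∑ j ∈ range (n + 1), P.coeff j * ∑ i, C i * X i ^ (N - n + j) = 0 := by
    simp_rw [mul_sum]
    rw [sum_comm]
    refine sum_eq_zero fun i _ => ?_
    calc ∑ j ∈ range (n + 1), P.coeff j * (C i * X i ^ (N - n + j))
        = X i ^ (N - n) * (C i * P.eval (X i)) := by
          rw [eval_eq_sum_range, mul_sum, mul_sum]
          exact sum_congr rfl fun j _ => by ring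
      _ = 0 := by rw [hroot i, mul_zero]
  rwa [sum_range_succ, sum_eq_zero fun j hj => by
    rw [hwin _ (by omega) (by have := mem_range.1 hj; omega), mul_zero], zero_add,
    hP.coeff_natDegree, one_mul, Nat.sub_add_cancel hN] at hrec

theorem sum_mul_pow_eq_zero_of_forall_lt {L ι : Type*} [Field L] [Fintype ι] (C X : ι → L)
    {S : Finset L} (hS : ∀ i, C i ≠ 0 → X i ∈ S) {N : ℕ} (hN : S.card ≤ N)
    (h : ∀ k < N, ∑ i, C i * X i ^ k = 0) : ∑ i, C i * X i ^ N = 0 := by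
  refine sum_mul_pow_eq_zero_of_monic C X (Lagrange.nodal_monic (v := id)) (fun i => ?_)
    (by rwa [Lagrange.natDegree_nodal]) fun k _ hk => h k hk
  by_cases hC : C i = 0
  · rw [hC, zero_mul]
  · rw [show eval (X i) (Lagrange.nodal S id) = 0 from
      Lagrange.eval_nodal_at_node (v := id) (hS i hC), mul_zero]

section AxisPolynomials

variable {L : Type} [Field L]

noncomputable def polyX₁ (P : L[X]) : (ℕ × ℕ) →₀ L :=
  P.toFinsupp.coeff.embDomain (Function.Embedding.sectL ℕ 0)

noncomputable def polyX₂ (P : L[X]) : (ℕ × ℕ) →₀ L :=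
  P.toFinsupp.coeff.embDomain (Function.Embedding.sectR 0 ℕ)

theorem support_polyX₁ (P : L[X]) :
    (polyX₁ P).support = P.support.map (Function.Embedding.sectL ℕ 0) := by
  rw [polyX₁, Finsupp.support_embDomain, support_toFinsupp]

theorem support_polyX₂ (P : L[X]) :
    (polyX₂ P).support = P.support.map (Function.Embedding.sectR 0 ℕ) := by
  rw [polyX₂, Finsupp.support_embDomain, support_toFinsupp]

theorem polyX₁_apply (P : L[X]) (j : ℕ) : polyX₁ P (j, 0) = P.coeff j :=
  (Finsupp.embDomain_apply_self _ _ j).trans (toFinsupp_apply P j)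

theorem polyX₂_apply (P : L[X]) (j : ℕ) : polyX₂ P (0, j) = P.coeff j :=
  (Finsupp.embDomain_apply_self _ _ j).trans (toFinsupp_apply P j)

theorem polyEval_polyX₁ (P : L[X]) (x y : L) : polyEval (polyX₁ P) x y = P.eval x := by
  rw [eval_eq_sum, Polynomial.sum, polyEval, support_polyX₁, sum_map]
  refine sum_congr rfl fun j _ => ?_
  simp only [Function.Embedding.sectL_apply, polyX₁_apply, pow_zero, mul_one]

theorem polyEval_polyX₂ (P : L[X]) (x y : L) : polyEval (polyX₂ P) x y = P.eval y := by
  rw [eval_eq_sum, Polynomial.sum, polyEval, support_polyX₂, sum_map]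
  refine sum_congr rfl fun j _ => ?_
  simp only [Function.Embedding.sectR_apply, polyX₂_apply, pow_zero, mul_one]

theorem isLP_polyX₁ (T : MonOrd) {P : L[X]} (hP : P ≠ 0) : IsLP T (polyX₁ P) (P.natDegree, 0) := by
  simp only [IsLP, support_polyX₁, mem_map, Function.Embedding.sectL_apply, forall_exists_index,
    and_imp]
  exact ⟨⟨_, natDegree_mem_support_of_nonzero hP, rfl⟩, fun _ j hj h =>
    h ▸ T.le_of_le (Prod.mk_le_mk.2 ⟨le_natDegree_of_mem_supp j hj, le_rfl⟩)⟩

theorem isLP_polyX₂ (T : MonOrd) {P : L[X]} (hP : P ≠ 0) : IsLP T (polyX₂ P) (0, P.natDegree) := by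
  simp only [IsLP, support_polyX₂, mem_map, Function.Embedding.sectR_apply, forall_exists_index,
    and_imp]
  exact ⟨⟨_, natDegree_mem_support_of_nonzero hP, rfl⟩, fun _ j hj h =>
    h ▸ T.le_of_le (Prod.mk_le_mk.2 ⟨le_rfl, le_natDegree_of_mem_supp j hj⟩)⟩

theorem exists_X₁_sub_interpolate {ι : Type*} (E : Finset ι) (x y : ι → L)
    (hy : Set.InjOn y E) :
    ∃ g : (ℕ × ℕ) →₀ L, (1, 0) ∈ g.support ∧ (∀ i ∈ E, polyEval g (x i) (y i) = 0) ∧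
      ∀ m ∈ g.support, m = (1, 0) ∨ (m.1 = 0 ∧ m.2 < E.card) := by
  classical
  set ρ := Lagrange.interpolate E y x
  have hρ : ∀ j ∈ ρ.support, j < E.card := fun j hj => by
    have := (le_degree_of_mem_supp j hj).trans_lt (Lagrange.degree_interpolate_lt x hy)
    exact_mod_cast this
  have hsupp : ∀ m ∈ (polyX₂ ρ).support, m.1 = 0 ∧ m.2 < E.card := by
    simp only [support_polyX₂, mem_map, Function.Embedding.sectR_apply]
    rintro _ ⟨j, hj, rfl⟩
    exact ⟨rfl, hρ j hj⟩
  refine ⟨Finsupp.single (1, 0) 1 - polyX₂ ρ, ?_, fun i hi => ?_, fun m hm => ?_⟩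
  · have : (1, 0) ∉ (polyX₂ ρ).support := fun h => one_ne_zero (hsupp _ h).1
    rw [Finsupp.mem_support_iff, Finsupp.sub_apply, Finsupp.single_eq_same,
      Finsupp.notMem_support_iff.1 this, sub_zero]
    exact one_ne_zero
  · have hsum : polyEval (Finsupp.single (1, 0) 1 - polyX₂ ρ) (x i) (y i) = x i - ρ.eval (y i) := by
      change (Finsupp.single (1, 0) 1 - polyX₂ ρ).sum (fun m c => c * x i ^ m.1 * y i ^ m.2) = _
      rw [Finsupp.sum_sub_index fun _ _ _ => by ring, Finsupp.sum_single_index (by ring),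
        ← polyEval_polyX₂ ρ (x i) (y i)]
      simp only [pow_one, pow_zero, one_mul, mul_one]
      rfl
    rw [hsum, Lagrange.eval_interpolate_at_node x hy hi, sub_self]
  · rcases mem_union.1 (Finsupp.support_sub hm) with h | h
    · exact Or.inl (mem_singleton.1 (Finsupp.support_single_subset h))
    · exact Or.inr (hsupp m h)

end AxisPolynomials

section Syndromes

variable {F L : Type} [Field F] [Field L] [Algebra F L] {r₁ r₂ : ℕ}
  {α₁ α₂ : L} {τ : Fin r₁ × Fin r₂} {e : Fin r₁ × Fin r₂ → F}

def IsErrorLocator (α₁ α₂ : L) (e : Fin r₁ × Fin r₂ → F) (g : (ℕ × ℕ) →₀ L) : Prop :=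
  ∀ p : Fin r₁ × Fin r₂, e p ≠ 0 → polyEval g (α₁ ^ (p.1 : ℕ)) (α₂ ^ (p.2 : ℕ)) = 0

noncomputable def syndromeCoeff (α₁ α₂ : L) (τ : Fin r₁ × Fin r₂) (e : Fin r₁ × Fin r₂ → F)
    (f : (ℕ × ℕ) →₀ L) (p : Fin r₁ × Fin r₂) : L :=
  algebraMap F L (e p) * (α₁ ^ (p.1 : ℕ)) ^ (τ.1 : ℕ) * (α₂ ^ (p.2 : ℕ)) ^ (τ.2 : ℕ)
    * polyEval f (α₁ ^ (p.1 : ℕ)) (α₂ ^ (p.2 : ℕ))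

theorem syndromeCoeff_eq_zero {f : (ℕ × ℕ) →₀ L} {p : Fin r₁ × Fin r₂} (he : e p = 0) :
    syndromeCoeff α₁ α₂ τ e f p = 0 := by
  simp [syndromeCoeff, he]

theorem fApp_synTable (f : (ℕ × ℕ) →₀ L) (s k : ℕ × ℕ) :
    fApp (synTable α₁ α₂ τ e) f s (s + k) =
      ∑ p, syndromeCoeff α₁ α₂ τ e f p * (α₁ ^ (p.1 : ℕ)) ^ k.1 * (α₂ ^ (p.2 : ℕ)) ^ k.2 := by
  rw [fApp, if_pos (Prod.le_def.1 le_self_add)]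
  unfold synTable
  simp only [mul_sum]
  rw [sum_comm]
  refine sum_congr rfl fun p _ => ?_
  rw [syndromeCoeff, polyEval, mul_sum, sum_mul, sum_mul]
  refine sum_congr rfl fun m _ => ?_
  simp only [Prod.fst_add, Prod.snd_add, Nat.add_sub_cancel_left, add_tsub_assoc_of_le
    (Nat.le_add_right _ _), pow_add, ← pow_mul, mul_comm (p.1 : ℕ), mul_comm (p.2 : ℕ)]
  ring

theorem fApp_synTable_eq_zero_of_isErrorLocator {g : (ℕ × ℕ) →₀ L}
    (hg : IsErrorLocator α₁ α₂ e g) (s n : ℕ × ℕ) : fApp (synTable α₁ α₂ τ e) g s n = 0 := by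
  by_cases h : s ≤ n
  · obtain ⟨k, rfl⟩ := exists_add_of_le h
    rw [fApp_synTable g s k]
    refine sum_eq_zero fun p _ => ?_
    by_cases he : e p = 0
    · rw [syndromeCoeff_eq_zero he, zero_mul, zero_mul]
    · rw [syndromeCoeff, hg p he, mul_zero, zero_mul, zero_mul]
  · rw [fApp, if_neg (mt Prod.le_def.2 h)]

theorem fApp_synTable_fst_eq_zero {S : Finset L} (hS : ∀ p, e p ≠ 0 → α₁ ^ (p.1 : ℕ) ∈ S)
    {f : (ℕ × ℕ) →₀ L} {s : ℕ × ℕ} {N : ℕ} (hN : s.1 + S.card ≤ N)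
    (h : ∀ k, s.1 ≤ k → k < N → fApp (synTable α₁ α₂ τ e) f s (k, s.2) = 0) :
    fApp (synTable α₁ α₂ τ e) f s (N, s.2) = 0 := by
  have hsum : ∀ k, fApp (synTable α₁ α₂ τ e) f s (s.1 + k, s.2) =
      ∑ p, syndromeCoeff α₁ α₂ τ e f p * (α₁ ^ (p.1 : ℕ)) ^ k := fun k => by
    have h := fApp_synTable (α₁ := α₁) (α₂ := α₂) (τ := τ) (e := e) f s (k, 0)
    simp only [pow_zero, mul_one] at h
    exact h
  obtain ⟨m, rfl⟩ := Nat.exists_eq_add_of_le (le_of_add_le_left hN)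
  rw [hsum]
  refine sum_mul_pow_eq_zero_of_forall_lt _ _ (fun p hp => hS p (mt syndromeCoeff_eq_zero hp))
    (by omega) fun k hk => ?_
  rw [← hsum]
  exact h _ (Nat.le_add_right _ _) (by omega)

theorem fApp_synTable_snd_eq_zero {S : Finset L} (hS : ∀ p, e p ≠ 0 → α₂ ^ (p.2 : ℕ) ∈ S)
    {f : (ℕ × ℕ) →₀ L} {s : ℕ × ℕ} {N : ℕ} (hN : s.2 + S.card ≤ N)
    (h : ∀ k, s.2 ≤ k → k < N → fApp (synTable α₁ α₂ τ e) f s (s.1, k) = 0) :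
    fApp (synTable α₁ α₂ τ e) f s (s.1, N) = 0 := by
  have hsum : ∀ k, fApp (synTable α₁ α₂ τ e) f s (s.1, s.2 + k) =
      ∑ p, syndromeCoeff α₁ α₂ τ e f p * (α₂ ^ (p.2 : ℕ)) ^ k := fun k => by
    have h := fApp_synTable (α₁ := α₁) (α₂ := α₂) (τ := τ) (e := e) f s (0, k)
    simp only [pow_zero, mul_one] at h
    exact h
  obtain ⟨m, rfl⟩ := Nat.exists_eq_add_of_le (le_of_add_le_left hN)
  rw [hsum]
  refine sum_mul_pow_eq_zero_of_forall_lt _ _ (fun p hp => hS p (mt syndromeCoeff_eq_zero hp))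
    (by omega) fun k hk => ?_
  rw [← hsum]
  exact h _ (Nat.le_add_right _ _) (by omega)

end Syndromes

/-- The footprint `Δ(u^l)` of a minimal set with defining points `s`, with the truncated
subtractions of the minimality hypothesis of `estimation_axes`. -/
def InFootprint {d : ℕ} (s : Fin d → ℕ × ℕ) (n : ℕ × ℕ) : Prop :=
  ∃ i : Fin d, ∃ h : i.1 + 1 < d, n.1 ≤ (s i).1 - 1 ∧ n.2 ≤ (s ⟨i.1 + 1, h⟩).2 - 1

section Footprint

variable {d : ℕ} {s : Fin d → ℕ × ℕ}

theorem inFootprint_zero_of_lt_last (hd : 1 < d) {j : ℕ}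
    (hj : j < (s ⟨d - 1, by omega⟩).2) : InFootprint s (0, j) := by
  refine ⟨⟨d - 2, by omega⟩, by simp only; omega, Nat.zero_le _, ?_⟩
  rw [show (⟨d - 2 + 1, _⟩ : Fin d) = ⟨d - 1, by omega⟩ from Fin.ext (by simp only; omega)]
  exact Nat.le_sub_one_of_lt hj

theorem inFootprint_one_zero (hd : 2 < d) (hdec : ∀ i j : Fin d, i < j → (s j).1 < (s i).1) :
    InFootprint s (1, 0) := by
  have h₁ := hdec ⟨d - 3, by omega⟩ ⟨d - 2, by omega⟩ (Fin.mk_lt_mk.2 (by omega))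
  have h₂ := hdec ⟨d - 2, by omega⟩ ⟨d - 1, by omega⟩ (Fin.mk_lt_mk.2 (by omega))
  exact ⟨⟨d - 3, by omega⟩, by simp only; omega, by simp only; omega, Nat.zero_le _⟩

end Footprint

theorem card_filter_ne_zero_eq_wt {F : Type} [Field F] {r₁ r₂ : ℕ} (e : Fin r₁ × Fin r₂ → F)
    [DecidablePred fun p => e p ≠ 0] : (univ.filter fun p => e p ≠ 0).card = wt e := by
  rw [wt, ← Set.ncard_coe_finset, coe_filter]
  simp

section MinimalSets

variable {F L : Type} [Field F] [Field L] {r₁ r₂ : ℕ} {α₁ α₂ : L}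
  {e : Fin r₁ × Fin r₂ → F} {T : MonOrd} {d : ℕ} {s : Fin d → ℕ × ℕ}

theorem head_fst_le_card (hd : 0 < d) (hlast : (s ⟨d - 1, Nat.sub_lt hd Nat.one_pos⟩).1 = 0)
    (hΔ : ∀ g sg, IsLP T g sg → IsErrorLocator α₁ α₂ e g → ¬ InFootprint s sg)
    {S : Finset L} (hS : ∀ p, e p ≠ 0 → α₁ ^ (p.1 : ℕ) ∈ S) : (s ⟨0, hd⟩).1 ≤ S.card := by
  rcases Nat.lt_or_ge 1 d with hd1 | hd1
  · by_contra! h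
    refine hΔ _ _ (isLP_polyX₁ T (Lagrange.nodal_monic (s := S) (v := id)).ne_zero)
      (fun p hp => ?_) ⟨⟨0, hd⟩, hd1, ?_, Nat.zero_le _⟩
    · rw [polyEval_polyX₁]
      exact Lagrange.eval_nodal_at_node (v := id) (hS p hp)
    · rw [Lagrange.natDegree_nodal]
      exact Nat.le_sub_one_of_lt h
  · rw [show (⟨d - 1, _⟩ : Fin d) = ⟨0, hd⟩ from Fin.ext (by simp only; omega)] at hlast
    omega

theorem last_snd_le_card (hd : 0 < d) (hfirst : (s ⟨0, hd⟩).2 = 0)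
    (hΔ : ∀ g sg, IsLP T g sg → IsErrorLocator α₁ α₂ e g → ¬ InFootprint s sg)
    {S : Finset L} (hS : ∀ p, e p ≠ 0 → α₂ ^ (p.2 : ℕ) ∈ S) :
    (s ⟨d - 1, Nat.sub_lt hd Nat.one_pos⟩).2 ≤ S.card := by
  rcases Nat.lt_or_ge 1 d with hd1 | hd1
  · by_contra! h
    refine hΔ _ _ (isLP_polyX₂ T (Lagrange.nodal_monic (s := S) (v := id)).ne_zero)
      (fun p hp => ?_) (inFootprint_zero_of_lt_last hd1 ?_)
    · rw [polyEval_polyX₂]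
      exact Lagrange.eval_nodal_at_node (v := id) (hS p hp)
    · rwa [Lagrange.natDegree_nodal]
  · rw [show (⟨d - 1, _⟩ : Fin d) = ⟨0, hd⟩ from Fin.ext (by simp only; omega)]
    omega

theorem last_snd_lt_card_of_injOn (hd : 2 < d)
    (hdec : ∀ i j : Fin d, i < j → (s j).1 < (s i).1)
    (hΔ : ∀ g sg, IsLP T g sg → IsErrorLocator α₁ α₂ e g → ¬ InFootprint s sg)
    {E : Finset (Fin r₁ × Fin r₂)} (hE : ∀ p, e p ≠ 0 → p ∈ E)
    (hinj : Set.InjOn (fun p : Fin r₁ × Fin r₂ => α₂ ^ (p.2 : ℕ)) E) :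
    (s ⟨d - 1, by omega⟩).2 < E.card := by
  obtain ⟨g, hg, hgE, hgsupp⟩ := exists_X₁_sub_interpolate E (fun p => α₁ ^ (p.1 : ℕ)) _ hinj
  obtain ⟨sg, hsg⟩ := T.exists_isLP (Finsupp.support_nonempty_iff.1 ⟨_, hg⟩)
  by_contra! hb
  refine hΔ g sg hsg (fun p hp => hgE p (hE p hp)) ?_
  rcases hgsupp sg hsg.1 with rfl | ⟨h₁, h₂⟩
  · exact inFootprint_one_zero hd hdec
  · obtain ⟨a, b⟩ := sg
    obtain rfl : a = 0 := h₁
    exact inFootprint_zero_of_lt_last (by omega) (by omega)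

theorem estimation_fst_axis [Algebra F L] {τ : Fin r₁ × Fin r₂} {t : ℕ} (hω : wt e ≤ t)
    (hd : 0 < d) {f : Fin d → (ℕ × ℕ) →₀ L}
    (hlast1 : (s ⟨d - 1, Nat.sub_lt hd Nat.one_pos⟩).1 = 0) (hfirst2 : (s ⟨0, hd⟩).2 = 0)
    (hgen : ∀ i : Fin d, ∀ k : ℕ × ℕ, (s i).1 ≤ k.1 → (s i).2 ≤ k.2 →
      T.lt k (2 * t - 1, 0) → fApp (synTable α₁ α₂ τ e) (f i) (s i) k = 0)
    (hΔ : ∀ g sg, IsLP T g sg → IsErrorLocator α₁ α₂ e g → ¬ InFootprint s sg)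
    (hnot : (s ⟨0, hd⟩).1 ≠ t) :
    ∃ i : Fin d, (s i).1 ≤ 2 * t - 1 ∧ (s i).2 ≤ 0 ∧
      fApp (synTable α₁ α₂ τ e) (f i) (s i) (2 * t - 1, 0) = 0 := by
  classical
  set S := (univ.filter fun p => e p ≠ 0).image fun p => α₁ ^ (p.1 : ℕ)
  have hS : ∀ p, e p ≠ 0 → α₁ ^ (p.1 : ℕ) ∈ S := fun p hp => mem_image_of_mem _ (by simpa)
  have hSt : S.card ≤ t := card_image_le.trans ((card_filter_ne_zero_eq_wt e).trans_le hω)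
  have hhead := head_fst_le_card hd hlast1 hΔ hS
  refine ⟨⟨0, hd⟩, by omega, hfirst2.le, ?_⟩
  have h := fApp_synTable_fst_eq_zero (τ := τ) (α₂ := α₂) hS (f := f ⟨0, hd⟩)
    (N := 2 * t - 1) (by omega) fun k hk hkN =>
      hgen _ (k, _) hk le_rfl (T.lt_of_lt (by simp [hfirst2, Prod.lt_iff, hkN]))
  rwa [hfirst2] at h

theorem estimation_snd_axis [Algebra F L] {τ : Fin r₁ × Fin r₂} {t : ℕ} (hω : wt e ≤ t)
    (hd : 0 < d) {f : Fin d → (ℕ × ℕ) →₀ L}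
    (hdec1 : ∀ i j : Fin d, i < j → (s j).1 < (s i).1)
    (hlast1 : (s ⟨d - 1, Nat.sub_lt hd Nat.one_pos⟩).1 = 0) (hfirst2 : (s ⟨0, hd⟩).2 = 0)
    (hgen : ∀ i : Fin d, ∀ k : ℕ × ℕ, (s i).1 ≤ k.1 → (s i).2 ≤ k.2 →
      T.lt k (0, 2 * t - 1) → fApp (synTable α₁ α₂ τ e) (f i) (s i) k = 0)
    (hΔ : ∀ g sg, IsLP T g sg → IsErrorLocator α₁ α₂ e g → ¬ InFootprint s sg)
    (hnot : ¬ ∃ h : 1 < d, (s ⟨1, h⟩).2 = t) :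
    ∃ i : Fin d, (s i).1 ≤ 0 ∧ (s i).2 ≤ 2 * t - 1 ∧
      fApp (synTable α₁ α₂ τ e) (f i) (s i) (0, 2 * t - 1) = 0 := by
  classical
  set E := univ.filter fun p => e p ≠ 0
  set S := E.image fun p => α₂ ^ (p.2 : ℕ)
  have hE : ∀ p, e p ≠ 0 → p ∈ E := fun p hp => by simpa [E]
  have hS : ∀ p, e p ≠ 0 → α₂ ^ (p.2 : ℕ) ∈ S := fun p hp => mem_image_of_mem _ (hE p hp)
  have hEt : E.card ≤ t := (card_filter_ne_zero_eq_wt e).trans_le hω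
  have hSE : S.card ≤ E.card := card_image_le
  have hlast := last_snd_le_card hd hfirst2 hΔ hS
  have hN : (s ⟨d - 1, Nat.sub_lt hd Nat.one_pos⟩).2 + S.card ≤ 2 * t - 1 := by
    by_contra! hbad
    have hd1 : 1 < d := by
      by_contra! hd1
      rw [show (⟨d - 1, _⟩ : Fin d) = ⟨0, hd⟩ from Fin.ext (by simp only; omega), hfirst2] at hbad
      omega
    have hd2 : 2 < d := by
      by_contra! hd2
      rw [show (⟨d - 1, _⟩ : Fin d) = ⟨1, hd1⟩ from Fin.ext (by simp only; omega)] at hbad hlast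
      exact hnot ⟨hd1, by omega⟩
    have := last_snd_lt_card_of_injOn hd2 hdec1 hΔ hE
      (card_image_iff.1 (show S.card = E.card by omega))
    omega
  refine ⟨_, hlast1.le, by omega, ?_⟩
  have h := fApp_synTable_snd_eq_zero (τ := τ) (α₁ := α₁) hS (f := f _) (N := 2 * t - 1) hN
    fun k hk hkN => hgen _ (_, k) le_rfl hk (T.lt_of_lt (by simp [hlast1, Prod.lt_iff, hkN]))
  rwa [hlast1] at h

end MinimalSets

theorem estimation_axes_general
    (F : Type) [Field F]
    (L : Type) [Field L] [Algebra F L]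
    (r₁ r₂ : ℕ)
    (α₁ α₂ : L)
    (T : MonOrd)
    (t : ℕ)
    (e : Fin r₁ × Fin r₂ → F) (hω : wt e ≤ t) (τ : Fin r₁ × Fin r₂)
    (U : ℕ × ℕ → L) (hU : U = synTable α₁ α₂ τ e)
    (l : ℕ × ℕ) (hl : l = (2 * t - 1, 0) ∨ l = (0, 2 * t - 1))
    (d : ℕ) (hd : 0 < d)
    (f : Fin d → (ℕ × ℕ) →₀ L) (s : Fin d → ℕ × ℕ)
    (hdec1 : ∀ i j : Fin d, i < j → (s j).1 < (s i).1)
    (hlast1 : (s ⟨d - 1, Nat.sub_lt hd Nat.one_pos⟩).1 = 0)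
    (hfirst2 : (s ⟨0, hd⟩).2 = 0)
    (hgen : ∀ i : Fin d, ∀ k : ℕ × ℕ, (s i).1 ≤ k.1 → (s i).2 ≤ k.2 →
      T.lt k l → fApp U (f i) (s i) k = 0)
    (hmin : ∀ (g : (ℕ × ℕ) →₀ L) (sg : ℕ × ℕ), IsLP T g sg →
      (∃ i : Fin d, ∃ h : i.1 + 1 < d,
        sg.1 ≤ (s i).1 - 1 ∧ sg.2 ≤ (s ⟨i.1 + 1, h⟩).2 - 1) →
      ∃ k : ℕ × ℕ, sg.1 ≤ k.1 ∧ sg.2 ≤ k.2 ∧ T.lt k l ∧ fApp U g sg k ≠ 0)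
    (hnot1 : ¬ (l = (0, 2 * t - 1) ∧ ∃ h : 1 < d, (s ⟨1, h⟩).2 = t))
    (hnot2 : ¬ (l = (2 * t - 1, 0) ∧ (s ⟨0, hd⟩).1 = t)) :
    ∃ i : Fin d, (s i).1 ≤ l.1 ∧ (s i).2 ≤ l.2 ∧ fApp U (f i) (s i) l = 0 := by
  subst hU
  have hΔ : ∀ g sg, IsLP T g sg → IsErrorLocator α₁ α₂ e g → ¬ InFootprint s sg :=
    fun g sg hg hloc hsg => by
      obtain ⟨k, -, -, -, hk⟩ := hmin g sg hg hsg
      exact hk (fApp_synTable_eq_zero_of_isErrorLocator hloc sg k)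
  rcases hl with rfl | rfl
  · exact estimation_fst_axis hω hd hlast1 hfirst2 hgen hΔ fun h => hnot2 ⟨rfl, h⟩
  · exact estimation_snd_axis hω hd hdec1 hlast1 hfirst2 hgen hΔ fun h => hnot1 ⟨rfl, h⟩

/-- either order: estimation of values at the last points of the axes
l = (2t−1, 0) or l = (0, 2t−1) of B(2t+1), outside the exceptional cases. -/
theorem estimation_axes
    (q : ℕ) (hq : IsPrimePow q)
    (F : Type) [Field F] [Fintype F] (hF : Fintype.card F = q)
    (L : Type) [Field L] [Algebra F L]
    (r₁ r₂ : ℕ) (hr₁ : 0 < r₁) (hr₂ : 0 < r₂) (hco : Nat.Coprime q (r₁ * r₂))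
    (α₁ α₂ : L) (hα₁ : IsPrimitiveRoot α₁ r₁) (hα₂ : IsPrimitiveRoot α₂ r₂)
    (T : MonOrd) (hT : T = lexMonOrd ∨ T = grMonOrd)
    (t : ℕ) (ht1 : 1 ≤ t) (ht4 : t ≤ 4) (htr1 : t ≤ r₁ / 2) (htr2 : t ≤ r₂ / 2)
    (e : Fin r₁ × Fin r₂ → F) (hω : wt e ≤ t) (τ : Fin r₁ × Fin r₂)
    (U : ℕ × ℕ → L) (hU : U = synTable α₁ α₂ τ e)
    (l : ℕ × ℕ) (hl : l = (2 * t - 1, 0) ∨ l = (0, 2 * t - 1))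
    (d : ℕ) (hd : 0 < d)
    (f : Fin d → (ℕ × ℕ) →₀ L) (s : Fin d → ℕ × ℕ)
    (hLP : ∀ i, IsLP T (f i) (s i))
    (hdec1 : ∀ i j : Fin d, i < j → (s j).1 < (s i).1)
    (hlast1 : (s ⟨d - 1, Nat.sub_lt hd Nat.one_pos⟩).1 = 0)
    (hinc2 : ∀ i j : Fin d, i < j → (s i).2 < (s j).2)
    (hfirst2 : (s ⟨0, hd⟩).2 = 0)
    (hgen : ∀ i : Fin d, ∀ k : ℕ × ℕ, (s i).1 ≤ k.1 → (s i).2 ≤ k.2 →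
      T.lt k l → fApp U (f i) (s i) k = 0)
    (hmin : ∀ (g : (ℕ × ℕ) →₀ L) (sg : ℕ × ℕ), IsLP T g sg →
      (∃ i : Fin d, ∃ h : i.1 + 1 < d,
        sg.1 ≤ (s i).1 - 1 ∧ sg.2 ≤ (s ⟨i.1 + 1, h⟩).2 - 1) →
      ∃ k : ℕ × ℕ, sg.1 ≤ k.1 ∧ sg.2 ≤ k.2 ∧ T.lt k l ∧ fApp U g sg k ≠ 0)
    (hnot1 : ¬ (l = (0, 2 * t - 1) ∧ ∃ h : 1 < d, (s ⟨1, h⟩).2 = t))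
    (hnot2 : ¬ (l = (2 * t - 1, 0) ∧ (s ⟨0, hd⟩).1 = t)) :
    ∃ i : Fin d, (s i).1 ≤ l.1 ∧ (s i).2 ≤ l.2 ∧ fApp U (f i) (s i) l = 0 :=
  estimation_axes_general F L r₁ r₂ α₁ α₂ T t e hω τ U hU l hl d hd f s hdec1 hlast1 hfirst2 hgen
    hmin hnot1 hnot2
end
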